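/- arXiv:1804.04396 — 4 statements merged into one kernel-verified Lean document; each statement's English description precedes it below -/
import Mathlib

section
/- As p decreases to p_c, (1 − q_p)/(p − p_c) converges to 2m₁³/m₂; that is, 1 − q_p = (2m₁³/m₂)(p − p_c)(1 + o(1)). -/
open Filter Set Topology
open scoped Topology

/-- The probability generating function `f(s) = ∑ₖ aₖ sᵏ` of a distribution `a` on ℕ. -/
noncomputable def pgf (a : ℕ → ℝ) (s : ℝ) : ℝ := ∑' n, a n * s ^ n

/-- The generating function `f_p(s) = f(ps + 1 - p)` of the binomially `p`-thinned
(percolated) offspring distribution. -/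
noncomputable def pgfp (a : ℕ → ℝ) (p s : ℝ) : ℝ := pgf a (p * s + 1 - p)

/-!
Write `s = 1 - q_p` for the survival probability; the fixed-point equation reads
`f (1 - p s) = 1 - s`. The alternating truncations of the binomial expansion bracket `(1 - x)^k`,
so the Taylor polynomials of `f` at `1` of order two and three bound `f (1 - x)` from above and
below. Plugged into the fixed-point equation they give
`m₂/2 p² s - m₃/6 p³ s² ≤ m₁ p - 1 = m₁ (p - p_c) ≤ m₂/2 p² s`,
and the claim follows once `s → 0`. For that, convexity of `f` gives `f (1 - p x) ≤ 1 - x` for every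
`x ∈ [0, s]`, which the third-order lower bound rules out at a fixed small `x` once `p` is close
to `p_c`.
-/

lemma natCast_mul_sub_one_nonneg (n : ℕ) : 0 ≤ (n : ℝ) * (n - 1) := by
  rw [← Nat.cast_descFactorial_two]
  positivity

lemma natCast_mul_sub_one_mul_sub_two_nonneg (n : ℕ) : 0 ≤ (n : ℝ) * (n - 1) * (n - 2) := by
  rcases n with _ | _ | n
  · simp
  · simp
  · push_cast
    ring_nf
    positivity

section TruncatedBinomial

variable {x : ℝ}

lemma one_sub_pow_le (hx0 : 0 ≤ x) (hx1 : x ≤ 1) (k : ℕ) :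
    (1 - x) ^ k ≤ 1 - k * x + k * (k - 1) / 2 * x ^ 2 := by
  induction k with
  | zero => simp
  | succ n ih =>
    have h := mul_le_mul_of_nonneg_left ih (sub_nonneg.2 hx1)
    have hn : 0 ≤ (n : ℝ) * (n - 1) / 2 * x ^ 3 :=
      mul_nonneg (div_nonneg (natCast_mul_sub_one_nonneg n) zero_le_two) (pow_nonneg hx0 3)
    rw [pow_succ' (1 - x)]
    push_cast
    nlinarith

lemma le_one_sub_pow (hx1 : x ≤ 1) (k : ℕ) :
    1 - k * x + k * (k - 1) / 2 * x ^ 2 - k * (k - 1) * (k - 2) / 6 * x ^ 3 ≤ (1 - x) ^ k := by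
  induction k with
  | zero => simp
  | succ n ih =>
    have h := mul_le_mul_of_nonneg_left ih (sub_nonneg.2 hx1)
    have hn : 0 ≤ (n : ℝ) * (n - 1) * (n - 2) / 6 * x ^ 4 := by
      have := natCast_mul_sub_one_mul_sub_two_nonneg n
      positivity
    rw [pow_succ' (1 - x)]
    push_cast
    nlinarith

end TruncatedBinomial

section GeneratingFunction

variable {a : ℕ → ℝ} {m₁ m₂ m₃ p x ε : ℝ}

lemma summable_pgf (ha0 : ∀ k, 0 ≤ a k) (ha : Summable a) {s : ℝ} (hs : s ∈ Icc (0 : ℝ) 1) :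
    Summable fun k => a k * s ^ k :=
  ha.of_nonneg_of_le (fun k => mul_nonneg (ha0 k) (pow_nonneg hs.1 k))
    (fun k => mul_le_of_le_one_right (ha0 k) (pow_le_one₀ hs.1 hs.2))

lemma pgf_one (ha1 : HasSum a 1) : pgf a 1 = 1 := by
  simp [pgf, ha1.tsum_eq]

lemma pgf_one_sub_le (ha0 : ∀ k, 0 ≤ a k) (ha1 : HasSum a 1)
    (hm1 : HasSum (fun k : ℕ => (k : ℝ) * a k) m₁)
    (hm2 : HasSum (fun k : ℕ => (k : ℝ) * ((k : ℝ) - 1) * a k) m₂)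
    (hx0 : 0 ≤ x) (hx1 : x ≤ 1) :
    pgf a (1 - x) ≤ 1 - m₁ * x + m₂ / 2 * x ^ 2 := by
  have hsum := (ha1.sub (hm1.mul_right x)).add (hm2.mul_right (x ^ 2 / 2))
  refine hasSum_le (fun k => ?_)
    (summable_pgf ha0 ha1.summable ⟨by linarith, by linarith⟩).hasSum
    hsum |>.trans_eq (by ring)
  calc a k * (1 - x) ^ k ≤ a k * (1 - k * x + k * (k - 1) / 2 * x ^ 2) :=
        mul_le_mul_of_nonneg_left (one_sub_pow_le hx0 hx1 k) (ha0 k)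
    _ = _ := by ring

lemma le_pgf_one_sub (ha0 : ∀ k, 0 ≤ a k) (ha1 : HasSum a 1)
    (hm1 : HasSum (fun k : ℕ => (k : ℝ) * a k) m₁)
    (hm2 : HasSum (fun k : ℕ => (k : ℝ) * ((k : ℝ) - 1) * a k) m₂)
    (hm3 : HasSum (fun k : ℕ => (k : ℝ) * ((k : ℝ) - 1) * ((k : ℝ) - 2) * a k) m₃)
    (hx0 : 0 ≤ x) (hx1 : x ≤ 1) :
    1 - m₁ * x + m₂ / 2 * x ^ 2 - m₃ / 6 * x ^ 3 ≤ pgf a (1 - x) := by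
  have hsum := ((ha1.sub (hm1.mul_right x)).add (hm2.mul_right (x ^ 2 / 2))).sub
    (hm3.mul_right (x ^ 3 / 6))
  refine (le_of_eq (by ring)).trans <| hasSum_le (fun k => ?_) hsum
    (summable_pgf ha0 ha1.summable ⟨by linarith, by linarith⟩).hasSum
  calc _ = a k * (1 - k * x + k * (k - 1) / 2 * x ^ 2 - k * (k - 1) * (k - 2) / 6 * x ^ 3) := by
        ring
    _ ≤ a k * (1 - x) ^ k := mul_le_mul_of_nonneg_left (le_one_sub_pow hx1 k) (ha0 k)

lemma convexOn_pgf (ha0 : ∀ k, 0 ≤ a k) (ha : Summable a) :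
    ConvexOn ℝ (Icc 0 1) (pgf a) := by
  refine ⟨convex_Icc 0 1, fun s hs t ht θ η hθ hη hθη => ?_⟩
  have hst : θ • s + η • t ∈ Icc (0 : ℝ) 1 := convex_Icc 0 1 hs ht hθ hη hθη
  simp only [pgf, smul_eq_mul]
  rw [← tsum_mul_left, ← tsum_mul_left,
    ← ((summable_pgf ha0 ha hs).mul_left θ).tsum_add ((summable_pgf ha0 ha ht).mul_left η)]
  refine (summable_pgf ha0 ha hst).tsum_le_tsum (fun k => ?_)
    (((summable_pgf ha0 ha hs).mul_left θ).add ((summable_pgf ha0 ha ht).mul_left η))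
  have hk := (convexOn_pow k).2 hs.1 ht.1 hθ hη hθη
  simp only [smul_eq_mul] at hk
  calc a k * (θ * s + η * t) ^ k ≤ a k * (θ * s ^ k + η * t ^ k) :=
        mul_le_mul_of_nonneg_left hk (ha0 k)
    _ = _ := by ring

lemma pgf_one_sub_mul_le_of_pgf_eq (ha0 : ∀ k, 0 ≤ a k) (ha1 : HasSum a 1)
    (hp0 : 0 ≤ p) (hp1 : p ≤ 1) (hx0 : 0 ≤ x) (hxε : x ≤ ε) (hε1 : ε ≤ 1)
    (hfix : pgf a (1 - p * ε) = 1 - ε) :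
    pgf a (1 - p * x) ≤ 1 - x := by
  obtain rfl | hε0 := hx0.trans hxε |>.eq_or_lt
  · obtain rfl : x = 0 := le_antisymm hxε hx0
    simpa using hfix.le
  have hθ0 : 0 ≤ x / ε := div_nonneg hx0 hε0.le
  have hθ1 : 0 ≤ 1 - x / ε := sub_nonneg.2 ((div_le_one hε0).2 hxε)
  have hconv := (convexOn_pgf ha0 ha1.summable).2 (x := 1 - p * ε) (y := 1)
    ⟨by nlinarith, by nlinarith⟩ ⟨zero_le_one, le_rfl⟩ hθ0 hθ1 (add_sub_cancel _ _)
  simp only [hfix, pgf_one ha1, smul_eq_mul] at hconv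
  calc pgf a (1 - p * x) = pgf a (x / ε * (1 - p * ε) + (1 - x / ε) * 1) := by
        congr 1; field_simp; ring
    _ ≤ x / ε * (1 - ε) + (1 - x / ε) * 1 := hconv
    _ = 1 - x := by field_simp; ring

lemma mul_sub_one_le_of_le_pgf (ha0 : ∀ k, 0 ≤ a k) (ha1 : HasSum a 1)
    (hm1 : HasSum (fun k : ℕ => (k : ℝ) * a k) m₁)
    (hm2 : HasSum (fun k : ℕ => (k : ℝ) * ((k : ℝ) - 1) * a k) m₂)
    (hp0 : 0 ≤ p) (hε0 : 0 < ε) (hpε : p * ε ≤ 1) (hle : 1 - ε ≤ pgf a (1 - p * ε)) :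
    m₁ * p - 1 ≤ m₂ / 2 * p ^ 2 * ε := by
  have h := hle.trans (pgf_one_sub_le ha0 ha1 hm1 hm2 (mul_nonneg hp0 hε0.le) hpε)
  nlinarith

lemma le_mul_sub_one_of_pgf_le (ha0 : ∀ k, 0 ≤ a k) (ha1 : HasSum a 1)
    (hm1 : HasSum (fun k : ℕ => (k : ℝ) * a k) m₁)
    (hm2 : HasSum (fun k : ℕ => (k : ℝ) * ((k : ℝ) - 1) * a k) m₂)
    (hm3 : HasSum (fun k : ℕ => (k : ℝ) * ((k : ℝ) - 1) * ((k : ℝ) - 2) * a k) m₃)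
    (hp0 : 0 ≤ p) (hx0 : 0 < x) (hpx : p * x ≤ 1) (hle : pgf a (1 - p * x) ≤ 1 - x) :
    x * (m₂ / 2 * p ^ 2 - m₃ / 6 * p ^ 3 * x) ≤ m₁ * p - 1 := by
  have h := (le_pgf_one_sub ha0 ha1 hm1 hm2 hm3 (mul_nonneg hp0 hx0.le) hpx).trans hle
  nlinarith

lemma sub_one_le_of_hasSum_factorialMoments (ha0 : ∀ k, 0 ≤ a k) (ha1 : HasSum a 1)
    (hm1 : HasSum (fun k : ℕ => (k : ℝ) * a k) m₁)
    (hm2 : HasSum (fun k : ℕ => (k : ℝ) * ((k : ℝ) - 1) * a k) m₂) :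
    m₁ - 1 ≤ m₂ := by
  refine hasSum_le (fun k => ?_) (hm1.sub ha1) hm2
  nlinarith [mul_nonneg (sq_nonneg ((k : ℝ) - 1)) (ha0 k)]

end GeneratingFunction

section Asymptotics

variable {a : ℕ → ℝ} {m₁ m₂ m₃ pc : ℝ} {ε : ℝ → ℝ}

lemma tendsto_zero_of_pgf_one_sub_mul_eq (ha0 : ∀ k, 0 ≤ a k) (ha1 : HasSum a 1)
    (hm1 : HasSum (fun k : ℕ => (k : ℝ) * a k) m₁)
    (hm2 : HasSum (fun k : ℕ => (k : ℝ) * ((k : ℝ) - 1) * a k) m₂)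
    (hm3 : HasSum (fun k : ℕ => (k : ℝ) * ((k : ℝ) - 1) * ((k : ℝ) - 2) * a k) m₃)
    (hm2pos : 0 < m₂) (hpc : m₁ * pc = 1) (hpc0 : 0 < pc) (hpc1 : pc < 1)
    (hε : ∀ p ∈ Ioc pc 1, ε p ∈ Ioc 0 1 ∧ pgf a (1 - p * ε p) = 1 - ε p) :
    Tendsto ε (𝓝[>] pc) (𝓝 0) := by
  have hmem : Ioc pc 1 ∈ 𝓝[>] pc := Ioc_mem_nhdsGT hpc1
  refine tendsto_order.2 ⟨fun b hb => ?_, fun b hb => ?_⟩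
  · filter_upwards [hmem] with p hp using hb.trans (hε p hp).1.1
  obtain ⟨x₀, hx₀b, ⟨hx₀0, hx₀1⟩, hx₀⟩ :
      ∃ x₀, x₀ < b ∧ x₀ ∈ Ioc 0 1 ∧ 0 < m₂ / 2 * pc ^ 2 - m₃ / 6 * pc ^ 3 * x₀ := by
    have hlim : Tendsto (fun x => m₂ / 2 * pc ^ 2 - m₃ / 6 * pc ^ 3 * x) (𝓝[>] 0)
        (𝓝 (m₂ / 2 * pc ^ 2)) := by
      have hcont : Continuous fun x : ℝ => m₂ / 2 * pc ^ 2 - m₃ / 6 * pc ^ 3 * x := by fun_prop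
      simpa using (hcont.tendsto 0).mono_left nhdsWithin_le_nhds
    have hlt : ∀ᶠ x in 𝓝[>] (0 : ℝ), x < b := (eventually_lt_nhds hb).filter_mono nhdsWithin_le_nhds
    have hIoc : ∀ᶠ x in 𝓝[>] (0 : ℝ), x ∈ Ioc 0 1 := Ioc_mem_nhdsGT one_pos
    exact (hlt.and (hIoc.and (hlim.eventually (eventually_gt_nhds (by positivity))))).exists
  have hpos : ∀ᶠ p in 𝓝[>] pc, 0 < x₀ * (m₂ / 2 * p ^ 2 - m₃ / 6 * p ^ 3 * x₀) - (m₁ * p - 1) := by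
    have hcont : Continuous fun p : ℝ =>
        x₀ * (m₂ / 2 * p ^ 2 - m₃ / 6 * p ^ 3 * x₀) - (m₁ * p - 1) := by
      fun_prop
    exact ((hcont.tendsto pc).mono_left nhdsWithin_le_nhds).eventually
      (eventually_gt_nhds (by rw [hpc, sub_self, sub_zero]; positivity))
  filter_upwards [hmem, hpos] with p hp hp_pos
  by_contra! hbε
  obtain ⟨⟨hε0, hε1⟩, hfix⟩ := hε p hp
  have hp0 : 0 ≤ p := hpc0.le.trans hp.1.le
  have hle := pgf_one_sub_mul_le_of_pgf_eq ha0 ha1 hp0 hp.2 hx₀0.le (hx₀b.le.trans hbε) hε1 hfix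
  have := le_mul_sub_one_of_pgf_le ha0 ha1 hm1 hm2 hm3 hp0 hx₀0
    (mul_le_one₀ hp.2 hx₀0.le hx₀1) hle
  linarith

lemma tendsto_div_sub_of_pgf_one_sub_mul_eq (ha0 : ∀ k, 0 ≤ a k) (ha1 : HasSum a 1)
    (hm1 : HasSum (fun k : ℕ => (k : ℝ) * a k) m₁)
    (hm2 : HasSum (fun k : ℕ => (k : ℝ) * ((k : ℝ) - 1) * a k) m₂)
    (hm3 : HasSum (fun k : ℕ => (k : ℝ) * ((k : ℝ) - 1) * ((k : ℝ) - 2) * a k) m₃)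
    (hm2pos : 0 < m₂) (hpc : m₁ * pc = 1) (hpc0 : 0 < pc) (hpc1 : pc < 1)
    (hε : ∀ p ∈ Ioc pc 1, ε p ∈ Ioc 0 1 ∧ pgf a (1 - p * ε p) = 1 - ε p) :
    Tendsto (fun p => ε p / (p - pc)) (𝓝[>] pc) (𝓝 (2 * m₁ ^ 3 / m₂)) := by
  have hε0 := tendsto_zero_of_pgf_one_sub_mul_eq ha0 ha1 hm1 hm2 hm3 hm2pos hpc hpc0 hpc1 hε
  have hid : Tendsto (fun p : ℝ => p) (𝓝[>] pc) (𝓝 pc) := nhdsWithin_le_nhds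
  have hden : Tendsto (fun p => m₂ / 2 * p ^ 2 - m₃ / 6 * p ^ 3 * ε p) (𝓝[>] pc)
      (𝓝 (m₂ / 2 * pc ^ 2 - m₃ / 6 * pc ^ 3 * 0)) :=
    ((hid.pow 2).const_mul _).sub (((hid.pow 3).const_mul _).mul hε0)
  have hden_pos : 0 < m₂ / 2 * pc ^ 2 - m₃ / 6 * pc ^ 3 * 0 := by
    rw [mul_zero, sub_zero]; positivity
  have hlower : 2 * m₁ ^ 3 / m₂ = 2 * m₁ / (m₂ * pc ^ 2) := by
    field_simp
    linear_combination m₁ * (m₁ * pc + 1) * hpc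
  have hupper : 2 * m₁ ^ 3 / m₂ = m₁ / (m₂ / 2 * pc ^ 2 - m₃ / 6 * pc ^ 3 * 0) := by
    rw [hlower]; ring
  have hmem : Ioc pc 1 ∈ 𝓝[>] pc := Ioc_mem_nhdsGT hpc1
  refine tendsto_of_tendsto_of_tendsto_of_le_of_le' (g := fun p => 2 * m₁ / (m₂ * p ^ 2))
    (h := fun p => m₁ / (m₂ / 2 * p ^ 2 - m₃ / 6 * p ^ 3 * ε p)) ?_ ?_ ?_ ?_
  · rw [hlower]
    exact tendsto_const_nhds.div ((hid.pow 2).const_mul m₂) (by positivity)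
  · rw [hupper]
    exact tendsto_const_nhds.div hden hden_pos.ne'
  · filter_upwards [hmem] with p hp
    obtain ⟨⟨hεp0, hεp1⟩, hfix⟩ := hε p hp
    have hp0 : 0 < p := hpc0.trans hp.1
    have := mul_sub_one_le_of_le_pgf ha0 ha1 hm1 hm2 hp0.le hεp0
      (mul_le_one₀ hp.2 hεp0.le hεp1) hfix.ge
    rw [div_le_div_iff₀ (by positivity) (sub_pos.2 hp.1)]
    nlinarith
  · filter_upwards [hmem, hden.eventually (eventually_gt_nhds hden_pos)] with p hp hDp
    obtain ⟨⟨hεp0, hεp1⟩, hfix⟩ := hε p hp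
    have hp0 : 0 < p := hpc0.trans hp.1
    have := le_mul_sub_one_of_pgf_le ha0 ha1 hm1 hm2 hm3 hp0.le hεp0
      (mul_le_one₀ hp.2 hεp0.le hεp1) hfix.le
    rw [div_le_div_iff₀ (sub_pos.2 hp.1) hDp]
    nlinarith

end Asymptotics

/-- As `p ↓ p_c`, `(1 - q_p)/(p - p_c) → 2m₁³/m₂`, i.e.
`1 - q_p = (2m₁³/m₂)(p - p_c)(1 + o(1))`. -/
theorem one_sub_extinction_prob_asymptotics
    (a : ℕ → ℝ) (m₁ m₂ m₃ pc : ℝ) (q : ℝ → ℝ)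
    (ha0 : ∀ k, 0 ≤ a k) (ha1 : HasSum a 1)
    (hm1 : HasSum (fun k : ℕ => (k : ℝ) * a k) m₁) (h1m : 1 < m₁)
    (hm2 : HasSum (fun k : ℕ => (k : ℝ) * ((k : ℝ) - 1) * a k) m₂)
    (hm3 : HasSum (fun k : ℕ => (k : ℝ) * ((k : ℝ) - 1) * ((k : ℝ) - 2) * a k) m₃)
    (hpc : pc = 1 / m₁)
    (hq : ∀ p ∈ Set.Ioc pc 1, q p ∈ Set.Ico (0 : ℝ) 1 ∧ pgfp a p (q p) = q p) :
    Tendsto (fun p => (1 - q p) / (p - pc)) (𝓝[>] pc) (𝓝 (2 * m₁ ^ 3 / m₂)) := by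
  have hm1pos : 0 < m₁ := zero_lt_one.trans h1m
  have hm1pc : m₁ * pc = 1 := by rw [hpc, mul_one_div_cancel hm1pos.ne']
  have hpc0 : 0 < pc := by rw [hpc]; positivity
  have hpc1 : pc < 1 := by rwa [hpc, div_lt_one hm1pos]
  have hm2pos : 0 < m₂ := by linarith [sub_one_le_of_hasSum_factorialMoments ha0 ha1 hm1 hm2]
  refine tendsto_div_sub_of_pgf_one_sub_mul_eq (ε := fun p => 1 - q p) ha0 ha1 hm1 hm2 hm3 hm2pos
    hm1pc hpc0 hpc1 fun p hp => ?_
  obtain ⟨⟨hq0, hq1⟩, hfix⟩ := hq p hp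
  refine ⟨⟨sub_pos.2 hq1, by linarith⟩, ?_⟩
  rw [pgfp, show p * q p + 1 - p = 1 - p * (1 - q p) by ring] at hfix
  rw [hfix, sub_sub_cancel]
end

section
/- As p decreases to p_c, (1 − f_p'(q_p))/(p − p_c) converges to m₁; that is, the mean of the dual (subcritical) offspring distribution satisfies μ_p* = f_p'(q_p) = 1 − m₁(p − p_c)(1 + o(1)). -/
/-!
Put `y = p q_p + 1 - p`, so that `f_p(q_p) = f(y)` and `f_p'(q_p) = p f'(y)`. Around `s = 1`,
`f(y) = 1 + m₁ (y - 1) + (y - 1)² F(y)` and `f'(y) = m₁ + (y - 1) G(y)`, where `F = pgfSecondSlope a`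
and `G = pgfDerivSlope a` are series of polynomials with nonnegative coefficients, hence continuous
and monotone on `[0, 1]` by domination at `1`, with `F(1) = m₂ / 2` and `G(1) = m₂`.
The fixed-point equation becomes `(1 - y) F(y) = m₁ - 1 / p`, after which the ratio is exactly
`m₁ (G(y) / F(y) - 1)`. As `F ≥ F(0) = f(0) - 1 + m₁ ≥ m₁ - 1 > 0`, the fixed-point equation forces
`y → 1` when `p ↓ p_c`, and the ratio tends to `m₁ (m₂ / (m₂ / 2) - 1) = m₁`.
-/

open Filter Set Topology
open scoped Topology

lemma monotoneOn_geom_sum (n : ℕ) : MonotoneOn (fun y : ℝ => ∑ i ∈ Finset.range n, y ^ i) (Ici 0) :=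
  fun _ hy _ _ hyz => Finset.sum_le_sum fun i _ => pow_le_pow_left₀ hy hyz i

def iteratedGeomSum (k : ℕ) (y : ℝ) : ℝ := ∑ j ∈ Finset.range k, ∑ i ∈ Finset.range j, y ^ i

lemma pow_sub_one_sub_mul_eq_sq_mul_iteratedGeomSum (k : ℕ) (y : ℝ) :
    y ^ k - 1 - k * (y - 1) = (y - 1) ^ 2 * iteratedGeomSum k y := by
  induction k with
  | zero => simp [iteratedGeomSum]
  | succ k ih =>
    rw [iteratedGeomSum, Finset.sum_range_succ, ← iteratedGeomSum]
    push_cast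
    linear_combination ih - (y - 1) * mul_geom_sum y k

lemma iteratedGeomSum_one (k : ℕ) : iteratedGeomSum k 1 = k * (k - 1) / 2 := by
  induction k with
  | zero => simp [iteratedGeomSum]
  | succ k ih =>
    rw [iteratedGeomSum, Finset.sum_range_succ, ← iteratedGeomSum, ih]
    simp only [one_pow, Finset.sum_const, Finset.card_range, nsmul_eq_mul, mul_one]
    push_cast
    ring

lemma monotoneOn_iteratedGeomSum (k : ℕ) : MonotoneOn (iteratedGeomSum k) (Ici 0) :=
  fun _ hy _ hz hyz => Finset.sum_le_sum fun j _ => monotoneOn_geom_sum j hy hz hyz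

lemma iteratedGeomSum_nonneg (k : ℕ) {y : ℝ} (hy : 0 ≤ y) : 0 ≤ iteratedGeomSum k y := by
  unfold iteratedGeomSum; positivity

lemma continuous_iteratedGeomSum (k : ℕ) : Continuous (iteratedGeomSum k) := by
  unfold iteratedGeomSum; fun_prop

section MonotoneSeries

variable {a : ℕ → ℝ} {φ : ℕ → ℝ → ℝ} {u v : ℝ}

lemma norm_mul_le_of_monotoneOn (ha : ∀ k, 0 ≤ a k) (hmono : ∀ k, MonotoneOn (φ k) (Icc u v))
    (hu : ∀ k, 0 ≤ φ k u) (k : ℕ) {y : ℝ} (hy : y ∈ Icc u v) : ‖a k * φ k y‖ ≤ a k * φ k v := by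
  have huv : u ≤ v := hy.1.trans hy.2
  have hφy : 0 ≤ φ k y := (hu k).trans (hmono k (left_mem_Icc.2 huv) hy hy.1)
  rw [Real.norm_of_nonneg (mul_nonneg (ha k) hφy)]
  exact mul_le_mul_of_nonneg_left (hmono k hy (right_mem_Icc.2 huv) hy.2) (ha k)

lemma summable_mul_of_monotoneOn (ha : ∀ k, 0 ≤ a k) (hmono : ∀ k, MonotoneOn (φ k) (Icc u v))
    (hu : ∀ k, 0 ≤ φ k u) (hv : Summable fun k => a k * φ k v) {y : ℝ} (hy : y ∈ Icc u v) :
    Summable fun k => a k * φ k y :=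
  .of_norm_bounded hv fun k => norm_mul_le_of_monotoneOn ha hmono hu k hy

lemma monotoneOn_tsum_mul (ha : ∀ k, 0 ≤ a k) (hmono : ∀ k, MonotoneOn (φ k) (Icc u v))
    (hu : ∀ k, 0 ≤ φ k u) (hv : Summable fun k => a k * φ k v) :
    MonotoneOn (fun y => ∑' k, a k * φ k y) (Icc u v) := fun _ hy _ hz hyz =>
  Summable.tsum_le_tsum (fun k => mul_le_mul_of_nonneg_left (hmono k hy hz hyz) (ha k))
    (summable_mul_of_monotoneOn ha hmono hu hv hy) (summable_mul_of_monotoneOn ha hmono hu hv hz)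

lemma continuousOn_tsum_mul (ha : ∀ k, 0 ≤ a k) (hcont : ∀ k, ContinuousOn (φ k) (Icc u v))
    (hmono : ∀ k, MonotoneOn (φ k) (Icc u v)) (hu : ∀ k, 0 ≤ φ k u)
    (hv : Summable fun k => a k * φ k v) :
    ContinuousOn (fun y => ∑' k, a k * φ k y) (Icc u v) :=
  continuousOn_tsum (fun k => continuousOn_const.mul (hcont k)) hv
    fun k _ hy => norm_mul_le_of_monotoneOn ha hmono hu k hy

end MonotoneSeries

def scaledGeomSum (k : ℕ) (y : ℝ) : ℝ := k * ∑ i ∈ Finset.range (k - 1), y ^ i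

lemma mul_pow_sub_one_eq_add_mul_scaledGeomSum (k : ℕ) (y : ℝ) :
    k * y ^ (k - 1) = k + (y - 1) * scaledGeomSum k y := by
  unfold scaledGeomSum
  linear_combination (k : ℝ) * (mul_geom_sum y (k - 1)).symm

lemma scaledGeomSum_one (k : ℕ) : scaledGeomSum k 1 = k * (k - 1) := by
  cases k <;> simp [scaledGeomSum]

lemma monotoneOn_scaledGeomSum (k : ℕ) : MonotoneOn (scaledGeomSum k) (Ici 0) :=
  fun _ hy _ hz hyz => mul_le_mul_of_nonneg_left (monotoneOn_geom_sum _ hy hz hyz) k.cast_nonneg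

lemma scaledGeomSum_nonneg (k : ℕ) {y : ℝ} (hy : 0 ≤ y) : 0 ≤ scaledGeomSum k y := by
  unfold scaledGeomSum; positivity

lemma continuous_scaledGeomSum (k : ℕ) : Continuous (scaledGeomSum k) := by
  unfold scaledGeomSum; fun_prop

noncomputable def pgfSecondSlope (a : ℕ → ℝ) (y : ℝ) : ℝ := ∑' k, a k * iteratedGeomSum k y

noncomputable def pgfDerivSlope (a : ℕ → ℝ) (y : ℝ) : ℝ :=
  ∑' k, a k * scaledGeomSum k y

section Pgf

variable {a : ℕ → ℝ} {m₁ m₂ : ℝ}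

lemma hasSum_mul_iteratedGeomSum_one
    (hm2 : HasSum (fun k : ℕ => (k : ℝ) * ((k : ℝ) - 1) * a k) m₂) :
    HasSum (fun k => a k * iteratedGeomSum k 1) (m₂ / 2) := by
  simp_rw [iteratedGeomSum_one, mul_div_assoc', mul_comm (a _)]
  exact hm2.div_const 2

lemma hasSum_mul_scaledGeomSum_one
    (hm2 : HasSum (fun k : ℕ => (k : ℝ) * ((k : ℝ) - 1) * a k) m₂) :
    HasSum (fun k => a k * scaledGeomSum k 1) m₂ := by
  simp_rw [scaledGeomSum_one, mul_comm (a _)]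
  exact hm2

lemma continuousOn_pgfSecondSlope (ha0 : ∀ k, 0 ≤ a k)
    (hm2 : HasSum (fun k : ℕ => (k : ℝ) * ((k : ℝ) - 1) * a k) m₂) :
    ContinuousOn (pgfSecondSlope a) (Icc 0 1) :=
  continuousOn_tsum_mul ha0 (fun k => (continuous_iteratedGeomSum k).continuousOn)
    (fun k => (monotoneOn_iteratedGeomSum k).mono Icc_subset_Ici_self)
    (fun k => iteratedGeomSum_nonneg k le_rfl) (hasSum_mul_iteratedGeomSum_one hm2).summable

lemma monotoneOn_pgfSecondSlope (ha0 : ∀ k, 0 ≤ a k)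
    (hm2 : HasSum (fun k : ℕ => (k : ℝ) * ((k : ℝ) - 1) * a k) m₂) :
    MonotoneOn (pgfSecondSlope a) (Icc 0 1) :=
  monotoneOn_tsum_mul ha0 (fun k => (monotoneOn_iteratedGeomSum k).mono Icc_subset_Ici_self)
    (fun k => iteratedGeomSum_nonneg k le_rfl) (hasSum_mul_iteratedGeomSum_one hm2).summable

lemma continuousOn_pgfDerivSlope (ha0 : ∀ k, 0 ≤ a k)
    (hm2 : HasSum (fun k : ℕ => (k : ℝ) * ((k : ℝ) - 1) * a k) m₂) :
    ContinuousOn (pgfDerivSlope a) (Icc 0 1) :=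
  continuousOn_tsum_mul ha0 (fun k => (continuous_scaledGeomSum k).continuousOn)
    (fun k => (monotoneOn_scaledGeomSum k).mono Icc_subset_Ici_self)
    (fun k => scaledGeomSum_nonneg k le_rfl) (hasSum_mul_scaledGeomSum_one hm2).summable

lemma pgfSecondSlope_one (hm2 : HasSum (fun k : ℕ => (k : ℝ) * ((k : ℝ) - 1) * a k) m₂) :
    pgfSecondSlope a 1 = m₂ / 2 :=
  (hasSum_mul_iteratedGeomSum_one hm2).tsum_eq

lemma pgfDerivSlope_one (hm2 : HasSum (fun k : ℕ => (k : ℝ) * ((k : ℝ) - 1) * a k) m₂) :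
    pgfDerivSlope a 1 = m₂ :=
  (hasSum_mul_scaledGeomSum_one hm2).tsum_eq

lemma pgf_eq_add_sq_mul_pgfSecondSlope (ha0 : ∀ k, 0 ≤ a k) (ha1 : HasSum a 1)
    (hm1 : HasSum (fun k : ℕ => (k : ℝ) * a k) m₁)
    (hm2 : HasSum (fun k : ℕ => (k : ℝ) * ((k : ℝ) - 1) * a k) m₂) {y : ℝ} (hy : y ∈ Icc 0 1) :
    pgf a y = 1 + m₁ * (y - 1) + (y - 1) ^ 2 * pgfSecondSlope a y := by
  have hQ : HasSum _ (pgfSecondSlope a y) := (summable_mul_of_monotoneOn ha0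
    (fun k => (monotoneOn_iteratedGeomSum k).mono Icc_subset_Ici_self)
    (fun k => iteratedGeomSum_nonneg k le_rfl) (hasSum_mul_iteratedGeomSum_one hm2).summable
    hy).hasSum
  refine HasSum.tsum_eq ?_
  convert (ha1.add (hm1.mul_right (y - 1))).add (hQ.mul_left ((y - 1) ^ 2)) using 1
  funext k
  linear_combination a k * pow_sub_one_sub_mul_eq_sq_mul_iteratedGeomSum k y

lemma hasDerivAt_pgf_of_abs_lt_one (ha0 : ∀ k, 0 ≤ a k)
    (hs : Summable fun k : ℕ => (k : ℝ) * a k) {y : ℝ} (hy : |y| < 1) :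
    HasDerivAt (pgf a) (∑' k, a k * (k * y ^ (k - 1))) y := by
  refine hasDerivAt_tsum_of_isPreconnected hs isOpen_Ioo (convex_Ioo (-1 : ℝ) 1).isPreconnected
    (fun k z _ => (hasDerivAt_pow k z).const_mul (a k)) (fun k z hz => ?_)
    (y₀ := 0) (by norm_num) ((hasSum_single 0 fun k hk => by simp [hk]).summable)
    (abs_lt.1 hy)
  have hz1 : |z| ^ (k - 1) ≤ 1 := pow_le_one₀ (abs_nonneg z) (abs_lt.2 hz).le
  rw [norm_mul, norm_mul, Real.norm_of_nonneg (ha0 k), Real.norm_natCast, norm_pow,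
    Real.norm_eq_abs]
  exact (mul_le_mul_of_nonneg_left (mul_le_of_le_one_right k.cast_nonneg hz1) (ha0 k)).trans_eq
    (mul_comm _ _)

lemma hasDerivAt_pgf (ha0 : ∀ k, 0 ≤ a k)
    (hm1 : HasSum (fun k : ℕ => (k : ℝ) * a k) m₁)
    (hm2 : HasSum (fun k : ℕ => (k : ℝ) * ((k : ℝ) - 1) * a k) m₂) {y : ℝ} (hy : y ∈ Ico 0 1) :
    HasDerivAt (pgf a) (m₁ + (y - 1) * pgfDerivSlope a y) y := by
  have hR : HasSum _ (pgfDerivSlope a y) := (summable_mul_of_monotoneOn ha0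
    (fun k => (monotoneOn_scaledGeomSum k).mono Icc_subset_Ici_self)
    (fun k => scaledGeomSum_nonneg k le_rfl) (hasSum_mul_scaledGeomSum_one hm2).summable
    (Ico_subset_Icc_self hy)).hasSum
  have hsum : HasSum (fun k => a k * (k * y ^ (k - 1))) (m₁ + (y - 1) * pgfDerivSlope a y) := by
    convert hm1.add (hR.mul_left (y - 1)) using 1
    funext k
    linear_combination a k * mul_pow_sub_one_eq_add_mul_scaledGeomSum k y
  rw [← hsum.tsum_eq]
  exact hasDerivAt_pgf_of_abs_lt_one ha0 hm1.summable (abs_lt.2 ⟨by linarith [hy.1], hy.2⟩)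

lemma HasDerivAt.pgfp {p s D : ℝ} (h : HasDerivAt (pgf a) D (p * s + 1 - p)) :
    HasDerivAt (pgfp a p) (p * D) s := by
  have hlin : HasDerivAt (fun s => p * s + 1 - p) p s := by
    simpa using ((hasDerivAt_id s).const_mul p).add_const 1 |>.sub_const p
  rw [mul_comm]
  exact h.comp s hlin

end Pgf

section FixedPoint

variable {a : ℕ → ℝ} {m₁ m₂ : ℝ}

lemma sub_one_le_pgfSecondSlope (ha0 : ∀ k, 0 ≤ a k) (ha1 : HasSum a 1)
    (hm1 : HasSum (fun k : ℕ => (k : ℝ) * a k) m₁)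
    (hm2 : HasSum (fun k : ℕ => (k : ℝ) * ((k : ℝ) - 1) * a k) m₂) {y : ℝ} (hy : y ∈ Icc 0 1) :
    m₁ - 1 ≤ pgfSecondSlope a y := by
  have hzero := pgf_eq_add_sq_mul_pgfSecondSlope ha0 ha1 hm1 hm2 (left_mem_Icc.2 zero_le_one)
  have hnonneg : 0 ≤ pgf a 0 := tsum_nonneg fun k => mul_nonneg (ha0 k) (pow_nonneg le_rfl k)
  norm_num at hzero
  calc m₁ - 1 ≤ pgfSecondSlope a 0 := by linarith
    _ ≤ pgfSecondSlope a y :=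
      monotoneOn_pgfSecondSlope ha0 hm2 (left_mem_Icc.2 zero_le_one) hy hy.1

lemma mul_add_one_sub_mem_Ico {p s : ℝ} (hp : p ∈ Ioc 0 1) (hs : s ∈ Ico 0 1) :
    p * s + 1 - p ∈ Ico 0 1 :=
  ⟨by nlinarith [hp.1, hp.2, hs.1], by nlinarith [hp.1, hs.2]⟩

lemma one_sub_mul_pgfSecondSlope_of_pgfp_eq (ha0 : ∀ k, 0 ≤ a k) (ha1 : HasSum a 1)
    (hm1 : HasSum (fun k : ℕ => (k : ℝ) * a k) m₁)
    (hm2 : HasSum (fun k : ℕ => (k : ℝ) * ((k : ℝ) - 1) * a k) m₂) {p s : ℝ} (hp : p ∈ Ioc 0 1)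
    (hs : s ∈ Ico 0 1) (hfix : pgfp a p s = s) :
    (1 - (p * s + 1 - p)) * pgfSecondSlope a (p * s + 1 - p) = m₁ - 1 / p := by
  have hval := pgf_eq_add_sq_mul_pgfSecondSlope ha0 ha1 hm1 hm2
    (Ico_subset_Icc_self (mul_add_one_sub_mem_Ico hp hs))
  rw [← pgfp, hfix] at hval
  have hp0 : p ≠ 0 := hp.1.ne'
  have hs1 : 1 - s ≠ 0 := sub_ne_zero.2 hs.2.ne'
  field_simp
  apply mul_left_cancel₀ hs1
  linear_combination -hval

lemma one_sub_deriv_pgfp_div_eq (ha0 : ∀ k, 0 ≤ a k) (ha1 : HasSum a 1)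
    (hm1 : HasSum (fun k : ℕ => (k : ℝ) * a k) m₁) (h1m : 1 < m₁)
    (hm2 : HasSum (fun k : ℕ => (k : ℝ) * ((k : ℝ) - 1) * a k) m₂) {p s : ℝ}
    (hp : p ∈ Ioc (1 / m₁) 1) (hs : s ∈ Ico 0 1) (hfix : pgfp a p s = s) :
    (1 - deriv (pgfp a p) s) / (p - 1 / m₁) = m₁ *
      (pgfDerivSlope a (p * s + 1 - p) / pgfSecondSlope a (p * s + 1 - p) - 1) := by
  have hp0 : 0 < p := lt_trans (by positivity) hp.1
  have hp' : p ∈ Ioc 0 1 := ⟨hp0, hp.2⟩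
  have hy := mul_add_one_sub_mem_Ico hp' hs
  have hderiv := (hasDerivAt_pgf ha0 hm1 hm2 hy).pgfp.deriv
  have hfixed := one_sub_mul_pgfSecondSlope_of_pgfp_eq ha0 ha1 hm1 hm2 hp' hs hfix
  have hF : 0 < pgfSecondSlope a (p * s + 1 - p) := by
    linarith [sub_one_le_pgfSecondSlope ha0 ha1 hm1 hm2 (Ico_subset_Icc_self hy)]
  have hpm : p - 1 / m₁ ≠ 0 := sub_ne_zero.2 hp.1.ne'
  rw [hderiv, div_eq_iff hpm]
  field_simp
  field_simp at hfixed
  linear_combination pgfDerivSlope a (p * s + 1 - p) * hfixed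

lemma tendsto_mul_add_one_sub_of_pgfp_eq (ha0 : ∀ k, 0 ≤ a k) (ha1 : HasSum a 1)
    (hm1 : HasSum (fun k : ℕ => (k : ℝ) * a k) m₁) (h1m : 1 < m₁)
    (hm2 : HasSum (fun k : ℕ => (k : ℝ) * ((k : ℝ) - 1) * a k) m₂) {q : ℝ → ℝ}
    (hq : ∀ p ∈ Ioc (1 / m₁) 1, q p ∈ Ico (0 : ℝ) 1 ∧ pgfp a p (q p) = q p) :
    Tendsto (fun p => p * q p + 1 - p) (𝓝[>] (1 / m₁)) (𝓝[Icc 0 1] 1) := by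
  have hpc : 0 < 1 / m₁ := by positivity
  have hIoc : Ioc (1 / m₁) 1 ∈ 𝓝[>] (1 / m₁) :=
    Ioc_mem_nhdsGT ((div_lt_one (by positivity)).2 h1m)
  have hbounds : ∀ p ∈ Ioc (1 / m₁) 1,
      1 - (m₁ - 1 / p) / (m₁ - 1) ≤ p * q p + 1 - p ∧ p * q p + 1 - p ∈ Icc 0 1 := by
    intro p hp
    have hp' : p ∈ Ioc 0 1 := ⟨hpc.trans hp.1, hp.2⟩
    have hy := mul_add_one_sub_mem_Ico hp' (hq p hp).1
    have hfixed := one_sub_mul_pgfSecondSlope_of_pgfp_eq ha0 ha1 hm1 hm2 hp' (hq p hp).1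
      (hq p hp).2
    have hF := sub_one_le_pgfSecondSlope ha0 ha1 hm1 hm2 (Ico_subset_Icc_self hy)
    refine ⟨?_, Ico_subset_Icc_self hy⟩
    rw [sub_le_iff_le_add, ← sub_le_iff_le_add', le_div_iff₀ (by linarith), ← hfixed]
    exact mul_le_mul_of_nonneg_left hF (by linarith [hy.2])
  have hlower : Tendsto (fun p => 1 - (m₁ - 1 / p) / (m₁ - 1)) (𝓝[>] (1 / m₁)) (𝓝 1) := by
    have hcont : ContinuousAt (fun p => 1 - (m₁ - 1 / p) / (m₁ - 1)) (1 / m₁) := by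
      fun_prop (disch := positivity)
    simpa using hcont.tendsto.mono_left nhdsWithin_le_nhds
  refine tendsto_nhdsWithin_iff.2 ⟨tendsto_of_tendsto_of_tendsto_of_le_of_le' hlower
    tendsto_const_nhds ?_ ?_, ?_⟩ <;> filter_upwards [hIoc] with p hp
  exacts [(hbounds p hp).1, (hbounds p hp).2.2, (hbounds p hp).2]

end FixedPoint

theorem dual_mean_asymptotics_general
    (a : ℕ → ℝ) (m₁ m₂ pc : ℝ) (q : ℝ → ℝ)
    (ha0 : ∀ k, 0 ≤ a k) (ha1 : HasSum a 1)
    (hm1 : HasSum (fun k : ℕ => (k : ℝ) * a k) m₁) (h1m : 1 < m₁)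
    (hm2 : HasSum (fun k : ℕ => (k : ℝ) * ((k : ℝ) - 1) * a k) m₂)
    (hpc : pc = 1 / m₁)
    (hq : ∀ p ∈ Set.Ioc pc 1, q p ∈ Set.Ico (0 : ℝ) 1 ∧ pgfp a p (q p) = q p) :
    Tendsto (fun p => (1 - deriv (pgfp a p) (q p)) / (p - pc)) (𝓝[>] pc) (𝓝 m₁) := by
  subst hpc
  have hy := tendsto_mul_add_one_sub_of_pgfp_eq ha0 ha1 hm1 h1m hm2 hq
  have hone : (1 : ℝ) ∈ Icc 0 1 := right_mem_Icc.2 zero_le_one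
  have hF := (continuousOn_pgfSecondSlope ha0 hm2 1 hone).tendsto.comp hy
  have hG := (continuousOn_pgfDerivSlope ha0 hm2 1 hone).tendsto.comp hy
  rw [pgfSecondSlope_one hm2] at hF
  rw [pgfDerivSlope_one hm2] at hG
  have hm₂ : 0 < m₂ := by
    linarith [pgfSecondSlope_one hm2 ▸ sub_one_le_pgfSecondSlope ha0 ha1 hm1 hm2 hone]
  have hlim := ((hG.div hF (by positivity)).sub_const 1).const_mul m₁
  rw [show m₁ * (m₂ / (m₂ / 2) - 1) = m₁ by field_simp; ring] at hlim
  refine hlim.congr' ?_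
  filter_upwards [Ioc_mem_nhdsGT ((div_lt_one (by positivity)).2 h1m)] with p hp
  exact (one_sub_deriv_pgfp_div_eq ha0 ha1 hm1 h1m hm2 hp (hq p hp).1 (hq p hp).2).symm

/-- As `p ↓ p_c`, `(1 - f_p'(q_p))/(p - p_c) → m₁`; that is, the mean of the dual
(subcritical) offspring distribution satisfies
`μ_p* = f_p'(q_p) = 1 - m₁(p - p_c)(1 + o(1))`. -/
theorem dual_mean_asymptotics
    (a : ℕ → ℝ) (m₁ m₂ m₃ pc : ℝ) (q : ℝ → ℝ)
    (ha0 : ∀ k, 0 ≤ a k) (ha1 : HasSum a 1)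
    (hm1 : HasSum (fun k : ℕ => (k : ℝ) * a k) m₁) (h1m : 1 < m₁)
    (hm2 : HasSum (fun k : ℕ => (k : ℝ) * ((k : ℝ) - 1) * a k) m₂)
    (hm3 : HasSum (fun k : ℕ => (k : ℝ) * ((k : ℝ) - 1) * ((k : ℝ) - 2) * a k) m₃)
    (hpc : pc = 1 / m₁)
    (hq : ∀ p ∈ Set.Ioc pc 1, q p ∈ Set.Ico (0 : ℝ) 1 ∧ pgfp a p (q p) = q p) :
    Tendsto (fun p => (1 - deriv (pgfp a p) (q p)) / (p - pc)) (𝓝[>] pc) (𝓝 m₁) :=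
  dual_mean_asymptotics_general a m₁ m₂ pc q ha0 ha1 hm1 h1m hm2 hpc hq
end

section
/- Define the effective speed by the Lyons–Pemantle–Peres formula v(p) = ∑_{k≥0} ((k−1)/(k+1)) p_k(p) (1 − q_p^{k+1})/(1 − q_p²), which is the almost-sure speed lim |X_n|/n of simple random walk on the p-percolated Galton–Watson tree conditioned on survival. Then lim_{p→p_c⁺} v(p)/(p − p_c)² = m₁⁴/(3m₂). -/
open Filter Set Topology
open scoped Topology

/-- The binomially `p`-thinned offspring probabilities
`p_k(p) = ∑_{n ≥ k} C(n,k) pᵏ (1-p)^{n-k} p_n`. -/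
noncomputable def thinned (a : ℕ → ℝ) (p : ℝ) (k : ℕ) : ℝ :=
  ∑' n, if k ≤ n then (n.choose k : ℝ) * p ^ k * (1 - p) ^ (n - k) * a n else 0

/-- The Lyons–Pemantle–Peres effective speed
`v(p) = ∑ₖ ((k-1)/(k+1)) p_k(p) (1 - q_p^{k+1})/(1 - q_p²)` of simple random walk on the
`p`-percolated Galton–Watson tree conditioned on survival. -/
noncomputable def speedLPP (a : ℕ → ℝ) (q : ℝ → ℝ) (p : ℝ) : ℝ :=
  ∑' k : ℕ, (((k : ℝ) - 1) / ((k : ℝ) + 1)) * thinned a p k *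
    ((1 - q p ^ (k + 1)) / (1 - q p ^ 2))

/-!
Write `ε = 1 - q_p`. Since `f_p(1 - ε) = f(1 - pε)`, the fixed-point equation is
`f(1 - pε) = 1 - ε`, and the alternating Taylor bounds for `(1 - x)ⁿ` turn it into
`p m₁ - 1 = p² m₂ ε / 2 + O(ε²)`; as `p m₁ - 1 = m₁ (p - p_c)`, this gives
`(p - p_c)/ε → p_c² m₂ / (2 m₁)`.

Since `(k - 1)/(k + 1) = 1 - 2/(k + 1)`, the speed is `v = 1 - 2B/(1 - q_p²)` with
`B = ∑ₖ p_k(p) (1 - q_p^{k+1})/(k + 1)`. The same Taylor bounds, now summed against the thinned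
law, whose factorial moments are `pʲ mⱼ`, give `v/ε² → p_c² m₂ / 12`, and the two limits combine
to `m₁⁴/(3 m₂)`.

That `ε → 0` as `p ↓ p_c` is the convexity of `f`: the chord slope `(1 - f(1 - x))/x` is antitone,
equals `1/p` at `x = pε`, and is `< m₁` for small `x > 0` because `m₂ ≥ m₁ - 1 > 0`.
-/

open Finset

section Binomial

variable (x : ℝ)

theorem sum_range_pow_mul_binomial (s : ℝ) (n : ℕ) :
    ∑ k ∈ range (n + 1), s ^ k * (n.choose k * x ^ k * (1 - x) ^ (n - k)) =
      (x * s + 1 - x) ^ n := by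
  rw [add_sub_assoc, add_pow]
  refine sum_congr rfl fun k _ => ?_
  ring

theorem sum_range_descFactorial_mul_binomial (j n : ℕ) :
    ∑ k ∈ range (n + 1), (k.descFactorial j : ℝ) * (n.choose k * x ^ k * (1 - x) ^ (n - k)) =
      n.descFactorial j * x ^ j := by
  induction j generalizing n with
  | zero => simpa using sum_range_pow_mul_binomial x 1 n
  | succ j ih =>
    cases n with
    | zero => simp
    | succ n =>
      rw [sum_range_succ', Nat.zero_descFactorial_succ, Nat.cast_zero, zero_mul, add_zero,
        Nat.succ_descFactorial_succ, pow_succ, Nat.cast_mul, mul_assoc, ← mul_assoc _ (x ^ j),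
        ← ih, sum_mul, mul_sum]
      refine sum_congr rfl fun k hk => ?_
      have hkn : n + 1 - (k + 1) = n - k := by omega
      have hchoose : ((k + 1 : ℕ) : ℝ) * (n + 1).choose (k + 1) = (n + 1) * n.choose k := by
        rw [mul_comm]; exact_mod_cast (Nat.add_one_mul_choose_eq n k).symm
      rw [hkn, Nat.succ_descFactorial_succ]
      push_cast at hchoose ⊢
      linear_combination (k.descFactorial j : ℝ) * x ^ (k + 1) * (1 - x) ^ (n - k) * hchoose

end Binomial

theorem neg_one_pow_mul_one_sub_pow_sub_sum_nonneg {x : ℝ} (hx0 : 0 ≤ x) (hx1 : x ≤ 1)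
    (n m : ℕ) :
    0 ≤ (-1) ^ (m + 1) * ((1 - x) ^ n - ∑ j ∈ range (m + 1), (n.choose j : ℝ) * (-x) ^ j) := by
  induction n generalizing m with
  | zero => simp [sum_range_succ']
  | succ n ih =>
    cases m with
    | zero => simpa using pow_le_one₀ (n := n + 1) (by linarith : 0 ≤ 1 - x) (by linarith)
    | succ m =>
      have hrec : (1 - x) ^ (n + 1) - ∑ j ∈ range (m + 1 + 1), ((n + 1).choose j : ℝ) * (-x) ^ j =
          ((1 - x) ^ n - ∑ j ∈ range (m + 1 + 1), (n.choose j : ℝ) * (-x) ^ j) -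
            x * ((1 - x) ^ n - ∑ j ∈ range (m + 1), (n.choose j : ℝ) * (-x) ^ j) := by
        rw [sum_range_succ' _ (m + 1), sum_range_succ' (fun j => (n.choose j : ℝ) * (-x) ^ j),
          mul_sub, mul_sum]
        simp only [Nat.choose_succ_succ, Nat.cast_add, add_mul, sum_add_distrib,
          Nat.choose_zero_right, Nat.succ_eq_add_one, pow_succ, mul_neg, sum_neg_distrib]
        ring_nf
      rw [hrec]
      have h1 := ih (m + 1)
      rw [pow_succ] at h1
      linear_combination h1 + mul_nonneg hx0 (ih m)

theorem one_sub_pow_bounds {x : ℝ} (hx0 : 0 ≤ x) (hx1 : x ≤ 1) (n : ℕ) :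
    1 - n * x + n * (n - 1) / 2 * x ^ 2 - n * (n - 1) * (n - 2) / 6 * x ^ 3 ≤ (1 - x) ^ n ∧
      (1 - x) ^ n ≤ 1 - n * x + n * (n - 1) / 2 * x ^ 2 ∧
      (1 - x) ^ n ≤ 1 - n * x + n * (n - 1) / 2 * x ^ 2 - n * (n - 1) * (n - 2) / 6 * x ^ 3 +
        n * (n - 1) * (n - 2) * (n - 3) / 24 * x ^ 4 := by
  have h := neg_one_pow_mul_one_sub_pow_sub_sum_nonneg hx0 hx1 n
  have h2 := h 2
  have h3 := h 3
  have h4 := h 4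
  have c3 : (n.choose 3 : ℝ) = n * (n - 1) * (n - 2) / 6 := by
    simp [Nat.cast_choose_eq_descPochhammer_div, descPochhammer_succ_eval, Nat.factorial]
  have c4 : (n.choose 4 : ℝ) = n * (n - 1) * (n - 2) * (n - 3) / 24 := by
    simp [Nat.cast_choose_eq_descPochhammer_div, descPochhammer_succ_eval, Nat.factorial]
  simp only [sum_range_succ, sum_range_zero, Nat.choose_zero_right, Nat.choose_one_right,
    Nat.cast_choose_two, c3, c4, Nat.cast_one] at h2 h3 h4
  exact ⟨by linarith, by linarith, by linarith⟩

section Thinning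

variable {a : ℕ → ℝ} {p : ℝ}

theorem binomial_term_nonneg (hp0 : 0 ≤ p) (hp1 : p ≤ 1) (n k : ℕ) :
    0 ≤ (n.choose k : ℝ) * p ^ k * (1 - p) ^ (n - k) :=
  mul_nonneg (mul_nonneg (Nat.cast_nonneg _) (pow_nonneg hp0 _)) (pow_nonneg (by linarith) _)

theorem thinned_nonneg (ha0 : ∀ n, 0 ≤ a n) (hp0 : 0 ≤ p) (hp1 : p ≤ 1) (k : ℕ) :
    0 ≤ thinned a p k :=
  tsum_nonneg fun n => by
    split_ifs
    exacts [mul_nonneg (binomial_term_nonneg hp0 hp1 n k) (ha0 n), le_rfl]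

theorem hasSum_mul_thinned (ha0 : ∀ n, 0 ≤ a n) (hp0 : 0 ≤ p) (hp1 : p ≤ 1) {w : ℕ → ℝ}
    (hw : ∀ k, 0 ≤ w k) {S : ℝ}
    (h : HasSum (fun n => a n * ∑ k ∈ range (n + 1),
      w k * (n.choose k * p ^ k * (1 - p) ^ (n - k))) S) :
    HasSum (fun k => w k * thinned a p k) S := by
  set F : ℕ × ℕ → ℝ := fun x => w x.2 *
    if x.2 ≤ x.1 then (x.1.choose x.2 : ℝ) * p ^ x.2 * (1 - p) ^ (x.1 - x.2) * a x.1 else 0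
  have hF0 : 0 ≤ F := fun x => mul_nonneg (hw _) (by
    split_ifs
    exacts [mul_nonneg (binomial_term_nonneg hp0 hp1 _ _) (ha0 _), le_rfl])
  have hrow : ∀ n, HasSum (fun k => F (n, k))
      (a n * ∑ k ∈ range (n + 1), w k * (n.choose k * p ^ k * (1 - p) ^ (n - k))) := by
    intro n
    have hsum : ∑ k ∈ range (n + 1), F (n, k) =
        a n * ∑ k ∈ range (n + 1), w k * (n.choose k * p ^ k * (1 - p) ^ (n - k)) := by
      rw [mul_sum]
      refine sum_congr rfl fun k hk => ?_
      simp only [F, if_pos (Nat.lt_succ_iff.mp (mem_range.mp hk))]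
      ring
    exact hsum ▸ hasSum_sum_of_ne_finset_zero fun k hk => by simp_all [F]
  have hF : Summable F := (summable_prod_of_nonneg hF0).2
    ⟨fun n => (hrow n).summable, by simpa only [(hrow _).tsum_eq] using h.summable⟩
  have hFS : HasSum F S := (h.unique (hF.hasSum.prod_fiberwise hrow)) ▸ hF.hasSum
  refine ((Equiv.prodComm ℕ ℕ).hasSum_iff.mpr hFS).prod_fiberwise fun k => ?_
  rw [thinned, ← tsum_mul_left]
  exact (hF.prod_symm.prod_factor k).hasSum

theorem hasSum_descFactorial_mul_thinned (ha0 : ∀ n, 0 ≤ a n) (hp0 : 0 ≤ p) (hp1 : p ≤ 1)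
    (j : ℕ) {μ : ℝ} (h : HasSum (fun n => (n.descFactorial j : ℝ) * a n) μ) :
    HasSum (fun k => (k.descFactorial j : ℝ) * thinned a p k) (p ^ j * μ) :=
  hasSum_mul_thinned ha0 hp0 hp1 (fun _ => Nat.cast_nonneg _) <|
    (h.mul_left (p ^ j)).congr_fun fun n => by
      rw [sum_range_descFactorial_mul_binomial]
      ring

theorem hasSum_pgf (ha0 : ∀ n, 0 ≤ a n) (ha : Summable a) {s : ℝ} (hs0 : 0 ≤ s) (hs1 : s ≤ 1) :
    HasSum (fun n => a n * s ^ n) (pgf a s) :=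
  (ha.of_nonneg_of_le (fun n => mul_nonneg (ha0 n) (pow_nonneg hs0 n))
    fun n => mul_le_of_le_one_right (ha0 n) (pow_le_one₀ hs0 hs1)).hasSum

theorem hasSum_pow_mul_thinned (ha0 : ∀ n, 0 ≤ a n) (ha : Summable a) (hp0 : 0 ≤ p)
    (hp1 : p ≤ 1) {s : ℝ} (hs0 : 0 ≤ s) (hs1 : s ≤ 1) :
    HasSum (fun k => s ^ k * thinned a p k) (pgfp a p s) :=
  hasSum_mul_thinned ha0 hp0 hp1 (fun _ => pow_nonneg hs0 _) <| by
    simp only [sum_range_pow_mul_binomial]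
    exact hasSum_pgf ha0 ha (by nlinarith) (by nlinarith)

end Thinning

theorem pgfp_eq_pgf_one_sub (a : ℕ → ℝ) (p c : ℝ) : pgfp a p c = pgf a (1 - p * (1 - c)) := by
  rw [pgfp]
  ring_nf

section ChordSlope

variable {a : ℕ → ℝ} {x : ℝ}

/-- The slope `(1 - f(1 - x))/x` of the chord of `f = pgf a` over `[1 - x, 1]`, as a series whose
terms are antitone in `x`. -/
noncomputable def pgfChordSlope (a : ℕ → ℝ) (x : ℝ) : ℝ :=
  ∑' k, a k * ∑ j ∈ range k, (1 - x) ^ j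

theorem geom_sum_one_sub_le (hx0 : 0 ≤ x) (hx1 : x ≤ 1) (k : ℕ) :
    ∑ j ∈ range k, (1 - x) ^ j ≤ k :=
  calc ∑ j ∈ range k, (1 - x) ^ j ≤ ∑ _j ∈ range k, (1 : ℝ) :=
        sum_le_sum fun j _ => pow_le_one₀ (by linarith) (by linarith)
    _ = k := by simp

theorem summable_pgfChordSlope (ha0 : ∀ k, 0 ≤ a k) (ha : Summable fun k : ℕ => (k : ℝ) * a k)
    (hx0 : 0 ≤ x) (hx1 : x ≤ 1) : Summable fun k => a k * ∑ j ∈ range k, (1 - x) ^ j :=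
  ha.of_nonneg_of_le
    (fun k => mul_nonneg (ha0 k) (sum_nonneg fun j _ => pow_nonneg (by linarith) j))
    fun k => by
      rw [mul_comm (k : ℝ)]
      exact mul_le_mul_of_nonneg_left (geom_sum_one_sub_le hx0 hx1 k) (ha0 k)

theorem pgfChordSlope_antitoneOn (ha0 : ∀ k, 0 ≤ a k)
    (ha : Summable fun k : ℕ => (k : ℝ) * a k) : AntitoneOn (pgfChordSlope a) (Set.Icc 0 1) :=
  fun x hx y hy hxy => (summable_pgfChordSlope ha0 ha hy.1 hy.2).tsum_le_tsum
    (fun k => mul_le_mul_of_nonneg_left (sum_le_sum fun j _ =>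
      pow_le_pow_left₀ (by linarith [hy.2]) (by linarith) j) (ha0 k))
    (summable_pgfChordSlope ha0 ha hx.1 hx.2)

theorem mul_pgfChordSlope (ha0 : ∀ k, 0 ≤ a k) (ha1 : HasSum a 1) (hx0 : 0 ≤ x) (hx1 : x ≤ 1) :
    x * pgfChordSlope a x = 1 - pgf a (1 - x) := by
  rw [pgfChordSlope, ← tsum_mul_left]
  refine ((ha1.sub (hasSum_pgf ha0 ha1.summable (by linarith) (by linarith))).congr_fun
    fun k => ?_).tsum_eq
  linear_combination (-(a k)) * geom_sum_mul (1 - x) k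

end ChordSlope

section Speed

variable {P : ℕ → ℝ} {c : ℝ}

theorem summable_one_sub_pow_succ_div_mul (hP0 : ∀ k, 0 ≤ P k) (hP : Summable P) (hc0 : 0 ≤ c)
    (hc1 : c ≤ 1) : Summable fun k : ℕ => (1 - c ^ (k + 1)) / (k + 1) * P k := by
  refine hP.of_nonneg_of_le (fun k => mul_nonneg ?_ (hP0 k)) fun k =>
    mul_le_of_le_one_left (hP0 k) ?_
  · exact div_nonneg (by linarith [pow_le_one₀ hc0 hc1 (n := k + 1)]) (by positivity)
  · rw [div_le_one (by positivity)]
    linarith [pow_nonneg hc0 (k + 1), (k.cast_nonneg : (0 : ℝ) ≤ k)]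

theorem hasSum_speed (hP0 : ∀ k, 0 ≤ P k) (hP1 : HasSum P 1) (hc0 : 0 ≤ c) (hc1 : c < 1)
    (hfix : HasSum (fun k => c ^ k * P k) c) :
    HasSum (fun k : ℕ => ((k - 1) / (k + 1)) * P k * ((1 - c ^ (k + 1)) / (1 - c ^ 2)))
      (1 - 2 * (∑' k : ℕ, (1 - c ^ (k + 1)) / (k + 1) * P k) / (1 - c ^ 2)) := by
  have hc2 : 1 - c ^ 2 ≠ 0 := by nlinarith
  have hB := (summable_one_sub_pow_succ_div_mul hP0 hP1.summable hc0 hc1.le).hasSum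
  have hA : HasSum (fun k => (1 - c ^ (k + 1)) * P k) (1 - c ^ 2) := by
    rw [sq]
    exact (hP1.sub (hfix.mul_left c)).congr_fun fun k => by ring
  have := (hA.div_const (1 - c ^ 2)).sub ((hB.mul_left 2).div_const (1 - c ^ 2))
  rw [div_self hc2] at this
  exact this.congr_fun fun k => by field_simp; ring

end Speed

theorem tendsto_of_le_of_le_of_continuousAt {X α : Type*} [TopologicalSpace X] {l : Filter α}
    {w : α → X} {z : X} {F G : X → ℝ} {g : α → ℝ} {L : ℝ} (hF : ContinuousAt F z)
    (hG : ContinuousAt G z) (hFL : F z = L) (hGL : G z = L) (hw : Tendsto w l (𝓝 z))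
    (hlo : ∀ᶠ t in l, F (w t) ≤ g t) (hhi : ∀ᶠ t in l, g t ≤ G (w t)) : Tendsto g l (𝓝 L) :=
  tendsto_of_tendsto_of_tendsto_of_le_of_le' (hFL ▸ hF.tendsto.comp hw) (hGL ▸ hG.tendsto.comp hw)
    hlo hhi

theorem Nat.cast_descFactorial_three (n : ℕ) :
    (n.descFactorial 3 : ℝ) = n * (n - 1) * (n - 2) := by
  rw [← descPochhammer_eval_eq_descFactorial]
  simp [descPochhammer_succ_eval]

structure FactorialMoments (b : ℕ → ℝ) (μ₁ μ₂ μ₃ : ℝ) : Prop where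
  nonneg : ∀ k, 0 ≤ b k
  hasSum_one : HasSum b 1
  hasSum_first : HasSum (fun k : ℕ => (k : ℝ) * b k) μ₁
  hasSum_second : HasSum (fun k : ℕ => (k : ℝ) * ((k : ℝ) - 1) * b k) μ₂
  hasSum_third : HasSum (fun k : ℕ => (k : ℝ) * ((k : ℝ) - 1) * ((k : ℝ) - 2) * b k) μ₃

namespace FactorialMoments

variable {a b : ℕ → ℝ} {μ₁ μ₂ μ₃ p c : ℝ} {q : ℝ → ℝ}

theorem thinning (h : FactorialMoments a μ₁ μ₂ μ₃) (hp0 : 0 ≤ p) (hp1 : p ≤ 1) :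
    FactorialMoments (thinned a p) (p * μ₁) (p ^ 2 * μ₂) (p ^ 3 * μ₃) := by
  have hj (j : ℕ) {μ : ℝ} := hasSum_descFactorial_mul_thinned h.nonneg hp0 hp1 j (μ := μ)
  refine ⟨thinned_nonneg h.nonneg hp0 hp1, ?_, ?_, ?_, ?_⟩
  · simpa using hj 0 (by simpa using h.hasSum_one)
  · simpa using hj 1 (by simpa using h.hasSum_first)
  · simpa only [Nat.cast_descFactorial_two] using
      hj 2 (by simpa only [Nat.cast_descFactorial_two] using h.hasSum_second)
  · simpa only [Nat.cast_descFactorial_three] using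
      hj 3 (by simpa only [Nat.cast_descFactorial_three] using h.hasSum_third)

theorem hasSum_cubic (h : FactorialMoments b μ₁ μ₂ μ₃) (α₀ α₁ α₂ α₃ : ℝ) :
    HasSum (fun k : ℕ => (α₀ + α₁ * k + α₂ * (k * (k - 1)) + α₃ * (k * (k - 1) * (k - 2))) * b k)
      (α₀ + α₁ * μ₁ + α₂ * μ₂ + α₃ * μ₃) := by
  have := (((h.hasSum_one.mul_left α₀).add (h.hasSum_first.mul_left α₁)).add
    (h.hasSum_second.mul_left α₂)).add (h.hasSum_third.mul_left α₃)
  rw [mul_one] at this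
  exact this.congr_fun fun k => by ring

theorem cubic_le_of_hasSum (h : FactorialMoments b μ₁ μ₂ μ₃) {w : ℕ → ℝ} {W : ℝ}
    (hW : HasSum (fun k => w k * b k) W) {α₀ α₁ α₂ α₃ : ℝ}
    (hle : ∀ k : ℕ, α₀ + α₁ * k + α₂ * (k * (k - 1)) + α₃ * (k * (k - 1) * (k - 2)) ≤ w k) :
    α₀ + α₁ * μ₁ + α₂ * μ₂ + α₃ * μ₃ ≤ W :=
  hasSum_le (fun k => mul_le_mul_of_nonneg_right (hle k) (h.nonneg k)) (h.hasSum_cubic _ _ _ _) hW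

theorem le_cubic_of_hasSum (h : FactorialMoments b μ₁ μ₂ μ₃) {w : ℕ → ℝ} {W : ℝ}
    (hW : HasSum (fun k => w k * b k) W) {α₀ α₁ α₂ α₃ : ℝ}
    (hle : ∀ k : ℕ, w k ≤ α₀ + α₁ * k + α₂ * (k * (k - 1)) + α₃ * (k * (k - 1) * (k - 2))) :
    W ≤ α₀ + α₁ * μ₁ + α₂ * μ₂ + α₃ * μ₃ :=
  hasSum_le (fun k => mul_le_mul_of_nonneg_right (hle k) (h.nonneg k)) hW (h.hasSum_cubic _ _ _ _)

theorem sub_one_le_second (h : FactorialMoments b μ₁ μ₂ μ₃) : μ₁ - 1 ≤ μ₂ := by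
  have := h.cubic_le_of_hasSum h.hasSum_second (α₀ := -1) (α₁ := 1) (α₂ := 0) (α₃ := 0)
    fun k => by nlinarith [sq_nonneg ((k : ℝ) - 1)]
  linarith

theorem pgf_one_sub_bounds (h : FactorialMoments b μ₁ μ₂ μ₃) {x : ℝ} (hx0 : 0 ≤ x)
    (hx1 : x ≤ 1) :
    1 - μ₁ * x + μ₂ / 2 * x ^ 2 - μ₃ / 6 * x ^ 3 ≤ pgf b (1 - x) ∧
      pgf b (1 - x) ≤ 1 - μ₁ * x + μ₂ / 2 * x ^ 2 := by
  have hpgf : HasSum (fun k => (1 - x) ^ k * b k) (pgf b (1 - x)) :=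
    (hasSum_pgf h.nonneg h.hasSum_one.summable (by linarith) (by linarith)).congr_fun
      fun _ => mul_comm _ _
  have hlo := h.cubic_le_of_hasSum hpgf (α₀ := 1) (α₁ := -x) (α₂ := x ^ 2 / 2)
    (α₃ := -(x ^ 3 / 6)) fun k => by linarith [(one_sub_pow_bounds hx0 hx1 k).1]
  have hhi := h.le_cubic_of_hasSum hpgf (α₀ := 1) (α₁ := -x) (α₂ := x ^ 2 / 2) (α₃ := 0)
    fun k => by linarith [(one_sub_pow_bounds hx0 hx1 k).2.1]
  constructor <;> linarith

theorem tsum_one_sub_pow_succ_div_bounds (h : FactorialMoments b μ₁ μ₂ μ₃) {ε : ℝ}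
    (hε0 : 0 ≤ ε) (hε1 : ε ≤ 1) :
    ε - μ₁ / 2 * ε ^ 2 + μ₂ / 6 * ε ^ 3 - μ₃ / 24 * ε ^ 4 ≤
        ∑' k : ℕ, (1 - (1 - ε) ^ (k + 1)) / (k + 1) * b k ∧
      ∑' k : ℕ, (1 - (1 - ε) ^ (k + 1)) / (k + 1) * b k ≤
        ε - μ₁ / 2 * ε ^ 2 + μ₂ / 6 * ε ^ 3 := by
  have hB := (summable_one_sub_pow_succ_div_mul h.nonneg h.hasSum_one.summable
    (by linarith : 0 ≤ 1 - ε) (by linarith)).hasSum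
  have hlo := h.cubic_le_of_hasSum hB (α₀ := ε) (α₁ := -(ε ^ 2 / 2)) (α₂ := ε ^ 3 / 6)
    (α₃ := -(ε ^ 4 / 24)) fun k => by
      have := (one_sub_pow_bounds hε0 hε1 (k + 1)).2.2
      push_cast at this
      rw [le_div_iff₀ (by positivity)]
      linarith
  have hhi := h.le_cubic_of_hasSum hB (α₀ := ε) (α₁ := -(ε ^ 2 / 2)) (α₂ := ε ^ 3 / 6)
    (α₃ := 0) fun k => by
      have := (one_sub_pow_bounds hε0 hε1 (k + 1)).1
      push_cast at this
      rw [div_le_iff₀ (by positivity)]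
      linarith
  constructor <;> linarith

theorem mul_sub_one_bounds_of_pgfp_eq_self (h : FactorialMoments a μ₁ μ₂ μ₃) (hp0 : 0 ≤ p)
    (hp1 : p ≤ 1) (hc0 : 0 ≤ c) (hc1 : c < 1) (hfix : pgfp a p c = c) :
    p ^ 2 * μ₂ * (1 - c) / 2 - p ^ 3 * μ₃ * (1 - c) ^ 2 / 6 ≤ p * μ₁ - 1 ∧
      p * μ₁ - 1 ≤ p ^ 2 * μ₂ * (1 - c) / 2 := by
  have hε : 0 < 1 - c := by linarith
  obtain ⟨hlo, hhi⟩ := h.pgf_one_sub_bounds (x := p * (1 - c)) (by positivity) (by nlinarith)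
  rw [← pgfp_eq_pgf_one_sub, hfix] at hlo hhi
  constructor <;> refine le_of_mul_le_mul_left ?_ hε <;> nlinarith

theorem speedLPP_div_sq_bounds (h : FactorialMoments a μ₁ μ₂ μ₃) (hp0 : 0 ≤ p) (hp1 : p ≤ 1)
    (hq0 : 0 ≤ q p) (hq1 : q p < 1) (hfix : pgfp a p (q p) = q p) :
    (p ^ 2 * μ₂ / 6 - p ^ 3 * μ₃ * (1 - q p) / 6) / (1 + q p) ≤ speedLPP a q p / (1 - q p) ^ 2 ∧
      speedLPP a q p / (1 - q p) ^ 2 ≤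
        (p ^ 2 * μ₂ / 6 + p ^ 3 * μ₃ * (1 - q p) / 12) / (1 + q p) := by
  set c := q p
  have hε : 0 < 1 - c := by linarith
  have hP := h.thinning hp0 hp1
  have hfixP : HasSum (fun k => c ^ k * thinned a p k) c := by
    have := hasSum_pow_mul_thinned h.nonneg h.hasSum_one.summable hp0 hp1 hq0 hq1.le
    rwa [hfix] at this
  obtain ⟨hBlo, hBhi⟩ := hP.tsum_one_sub_pow_succ_div_bounds hε.le (by linarith)
  simp only [sub_sub_cancel] at hBlo hBhi
  obtain ⟨hKlo, hKhi⟩ := h.mul_sub_one_bounds_of_pgfp_eq_self hp0 hp1 hq0 hq1 hfix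
  set B := ∑' k : ℕ, (1 - c ^ (k + 1)) / (k + 1) * thinned a p k
  have hV : speedLPP a q p = 1 - 2 * B / (1 - c ^ 2) :=
    (hasSum_speed hP.nonneg hP.hasSum_one hq0 hq1 hfixP).tsum_eq
  have hsplit :
      speedLPP a q p / (1 - c) ^ 2 = ((1 - c) * (1 + c) - 2 * B) / (1 - c) ^ 3 / (1 + c) := by
    have : 1 + c ≠ 0 := by linarith
    have : 1 - c ^ 2 ≠ 0 := by nlinarith
    rw [hV]
    field_simp
    ring
  rw [hsplit]
  constructor
  · refine div_le_div_of_nonneg_right ((le_div_iff₀ (by positivity)).2 ?_) (by linarith)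
    nlinarith [mul_le_mul_of_nonneg_left hKlo (sq_nonneg (1 - c))]
  · refine div_le_div_of_nonneg_right ((div_le_iff₀ (by positivity)).2 ?_) (by linarith)
    nlinarith [mul_le_mul_of_nonneg_left hKhi (sq_nonneg (1 - c))]

theorem eventually_pgfChordSlope_lt (h : FactorialMoments b μ₁ μ₂ μ₃) (hμ₂ : 0 < μ₂) :
    ∀ᶠ x in 𝓝[>] 0, pgfChordSlope b x < μ₁ := by
  have hsmall : ∀ᶠ x in 𝓝[>] (0 : ℝ), μ₃ * x < 3 * μ₂ :=
    ((continuous_const_mul μ₃).tendsto' 0 0 (mul_zero μ₃)).mono_left nhdsWithin_le_nhds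
      |>.eventually (gt_mem_nhds (by linarith))
  filter_upwards [hsmall, Ioo_mem_nhdsGT one_pos] with x hx hx01
  have hslope := mul_pgfChordSlope h.nonneg h.hasSum_one hx01.1.le hx01.2.le
  have hpgf := (h.pgf_one_sub_bounds hx01.1.le hx01.2.le).1
  refine lt_of_mul_lt_mul_left ?_ hx01.1.le
  nlinarith [mul_pos hx01.1 hx01.1]

theorem tendsto_extinction (h : FactorialMoments a μ₁ μ₂ μ₃) (h1 : 1 < μ₁)
    (hq : ∀ p ∈ Set.Ioc (1 / μ₁) 1, q p ∈ Set.Ico 0 1 ∧ pgfp a p (q p) = q p) :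
    Tendsto q (𝓝[>] (1 / μ₁)) (𝓝 1) := by
  set pc := 1 / μ₁
  have hpc : 0 < pc := by positivity
  have hpcμ : pc * μ₁ = 1 := one_div_mul_cancel (by positivity)
  have hIoc : ∀ᶠ p in 𝓝[>] pc, p ∈ Set.Ioc pc 1 :=
    Ioc_mem_nhdsGT (by rw [div_lt_one] <;> linarith)
  refine tendsto_order.2 ⟨fun r hr => ?_, fun r hr => hIoc.mono fun p hp => by
    linarith [(hq p hp).1.2]⟩
  obtain ⟨x₀, hx₀μ, hx₀⟩ := ((h.eventually_pgfChordSlope_lt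
    (by linarith [h.sub_one_le_second])).and
    (Ioo_mem_nhdsGT (show (0 : ℝ) < min 1 ((1 - r) * pc) by positivity))).exists
  have hnear : ∀ᶠ p in 𝓝[>] pc, p * pgfChordSlope a x₀ < 1 :=
    ((continuous_mul_const _).tendsto pc).mono_left nhdsWithin_le_nhds
      |>.eventually (gt_mem_nhds (by nlinarith))
  filter_upwards [hIoc, hnear] with p hp hpH
  obtain ⟨⟨hq0, hq1⟩, hfix⟩ := hq p hp
  have hp0 : 0 < p := hpc.trans hp.1
  have hx0 : 0 ≤ p * (1 - q p) := by nlinarith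
  have hx1 : p * (1 - q p) ≤ 1 := by nlinarith [hp.2]
  have hslope : p * pgfChordSlope a (p * (1 - q p)) = 1 := by
    have := mul_pgfChordSlope h.nonneg h.hasSum_one hx0 hx1
    rw [← pgfp_eq_pgf_one_sub, hfix] at this
    refine mul_left_cancel₀ (show 1 - q p ≠ 0 by linarith) ?_
    linear_combination this
  have hsmall : p * (1 - q p) < x₀ := by
    by_contra! hge
    have := pgfChordSlope_antitoneOn h.nonneg h.hasSum_first.summable
      ⟨hx₀.1.le, hx₀.2.le.trans (min_le_left _ _)⟩ ⟨hx0, hx1⟩ hge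
    nlinarith
  nlinarith [hx₀.2.trans_le (min_le_right _ _), hp.1]

theorem tendsto_prod_extinction (h : FactorialMoments a μ₁ μ₂ μ₃) (h1 : 1 < μ₁)
    (hq : ∀ p ∈ Set.Ioc (1 / μ₁) 1, q p ∈ Set.Ico 0 1 ∧ pgfp a p (q p) = q p) :
    Tendsto (fun p => (p, q p)) (𝓝[>] (1 / μ₁)) (𝓝 (1 / μ₁, 1)) :=
  (tendsto_id.mono_left nhdsWithin_le_nhds).prodMk_nhds (h.tendsto_extinction h1 hq)

theorem tendsto_sub_div_one_sub_extinction (h : FactorialMoments a μ₁ μ₂ μ₃) (h1 : 1 < μ₁)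
    (hq : ∀ p ∈ Set.Ioc (1 / μ₁) 1, q p ∈ Set.Ico 0 1 ∧ pgfp a p (q p) = q p) :
    Tendsto (fun p => (p - 1 / μ₁) / (1 - q p)) (𝓝[>] (1 / μ₁))
      (𝓝 ((1 / μ₁) ^ 2 * μ₂ / 2 / μ₁)) := by
  have hμ : 0 < μ₁ := by linarith
  refine tendsto_of_le_of_le_of_continuousAt
    (F := fun x : ℝ × ℝ => (x.1 ^ 2 * μ₂ / 2 - x.1 ^ 3 * μ₃ * (1 - x.2) / 6) / μ₁)
    (G := fun x : ℝ × ℝ => x.1 ^ 2 * μ₂ / 2 / μ₁) (by fun_prop) (by fun_prop) (by ring) rfl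
    (h.tendsto_prod_extinction h1 hq) ?_ ?_ <;>
  filter_upwards [Ioc_mem_nhdsGT (show 1 / μ₁ < 1 by rw [div_lt_one hμ]; exact h1)] with p hp <;>
  obtain ⟨⟨hq0, hq1⟩, hfix⟩ := hq p hp <;>
  obtain ⟨hlo, hhi⟩ := h.mul_sub_one_bounds_of_pgfp_eq_self
    (by linarith [hp.1, one_div_pos.2 hμ]) hp.2 hq0 hq1 hfix <;>
  have hpc : 1 / μ₁ * μ₁ = 1 := one_div_mul_cancel hμ.ne'
  · rw [div_le_div_iff₀ hμ (by linarith)]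
    nlinarith
  · rw [div_le_div_iff₀ (by linarith) hμ]
    nlinarith

theorem tendsto_speedLPP_div_sq (h : FactorialMoments a μ₁ μ₂ μ₃) (h1 : 1 < μ₁)
    (hq : ∀ p ∈ Set.Ioc (1 / μ₁) 1, q p ∈ Set.Ico 0 1 ∧ pgfp a p (q p) = q p) :
    Tendsto (fun p => speedLPP a q p / (1 - q p) ^ 2) (𝓝[>] (1 / μ₁))
      (𝓝 ((1 / μ₁) ^ 2 * μ₂ / 12)) := by
  have hμ : 0 < μ₁ := by linarith
  refine tendsto_of_le_of_le_of_continuousAt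
    (F := fun x : ℝ × ℝ => (x.1 ^ 2 * μ₂ / 6 - x.1 ^ 3 * μ₃ * (1 - x.2) / 6) / (1 + x.2))
    (G := fun x : ℝ × ℝ => (x.1 ^ 2 * μ₂ / 6 + x.1 ^ 3 * μ₃ * (1 - x.2) / 12) / (1 + x.2))
    (by fun_prop (disch := norm_num)) (by fun_prop (disch := norm_num)) (by ring) (by ring)
    (h.tendsto_prod_extinction h1 hq) ?_ ?_ <;>
  filter_upwards [Ioc_mem_nhdsGT (show 1 / μ₁ < 1 by rw [div_lt_one hμ]; exact h1)] with p hp <;>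
  obtain ⟨⟨hq0, hq1⟩, hfix⟩ := hq p hp
  · exact (h.speedLPP_div_sq_bounds (by linarith [hp.1, one_div_pos.2 hμ]) hp.2 hq0 hq1 hfix).1
  · exact (h.speedLPP_div_sq_bounds (by linarith [hp.1, one_div_pos.2 hμ]) hp.2 hq0 hq1 hfix).2

end FactorialMoments

/-- The effective speed of random walk on a barely supercritical Galton–Watson tree
satisfies `lim_{p ↓ p_c} v(p)/(p - p_c)² = m₁⁴/(3m₂)`. -/
theorem speed_asymptotics
    (a : ℕ → ℝ) (m₁ m₂ m₃ pc : ℝ) (q : ℝ → ℝ)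
    (ha0 : ∀ k, 0 ≤ a k) (ha1 : HasSum a 1)
    (hm1 : HasSum (fun k : ℕ => (k : ℝ) * a k) m₁) (h1m : 1 < m₁)
    (hm2 : HasSum (fun k : ℕ => (k : ℝ) * ((k : ℝ) - 1) * a k) m₂)
    (hm3 : HasSum (fun k : ℕ => (k : ℝ) * ((k : ℝ) - 1) * ((k : ℝ) - 2) * a k) m₃)
    (hpc : pc = 1 / m₁)
    (hq : ∀ p ∈ Set.Ioc pc 1, q p ∈ Set.Ico (0 : ℝ) 1 ∧ pgfp a p (q p) = q p) :
    Tendsto (fun p => speedLPP a q p / (p - pc) ^ 2) (𝓝[>] pc)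
      (𝓝 (m₁ ^ 4 / (3 * m₂))) := by
  subst hpc
  have ha : FactorialMoments a m₁ m₂ m₃ := ⟨ha0, ha1, hm1, hm2, hm3⟩
  have hm₁ : 0 < m₁ := by linarith
  have hm₂ : 0 < m₂ := by linarith [ha.sub_one_le_second]
  have hlim := (ha.tendsto_speedLPP_div_sq h1m hq).div
    ((ha.tendsto_sub_div_one_sub_extinction h1m hq).pow 2) (by positivity)
  rw [show (1 / m₁) ^ 2 * m₂ / 12 / ((1 / m₁) ^ 2 * m₂ / 2 / m₁) ^ 2 = m₁ ^ 4 / (3 * m₂) by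
    field_simp; ring] at hlim
  refine hlim.congr' ?_
  filter_upwards [Ioc_mem_nhdsGT (show 1 / m₁ < 1 by rw [div_lt_one hm₁]; exact h1m)] with p hp
  have hε : 1 - q p ≠ 0 := by linarith [(hq p hp).1.2]
  have hp : p - 1 / m₁ ≠ 0 := by linarith [hp.1]
  simp only [Pi.div_apply]
  field_simp
end

section
/- With v(p) = ∑_{k≥0} ((k−1)/(k+1)) p_k(p) (1 − q_p^{k+1})/(1 − q_p²), the expansion (1 + q_p)·v(p) = m₁(p − p_c) − (1/2)(1 − q_p)p²m₂ + (1/6)(1 − q_p)²(p³m₃ + p²m₂) + o((1 − q_p)²) holds as p decreases to p_c; equivalently, [(1 + q_p)v(p) − m₁(p − p_c) + (1/2)(1 − q_p)p²m₂ − (1/6)(1 − q_p)²(p³m₃ + p²m₂)]/(1 − q_p)² → 0 as p → p_c from the right. -/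
open Filter Set Topology
open scoped Topology

/-!
Write `w = 1 - q_p` and `u = p w`, so that the fixed-point equation reads `f(1 - u) = 1 - w`.
Summing the thinned law against `1 - s^{k+1}` and against `(1 - s^{k+1})/(k+1) = ∫_s^1 t^k dt`
gives `(1 + q_p) v(p) = (1 - q_p² - (2/p) ∫_{1-u}^1 f) / w`. Expanding `f(1 - u)` and
`∫_{1-u}^1 f` to second order in `u`, with remainders `D = pgfRem a` and `E = primRem a`,
the normalised error equals `p²m₂/2 + q_p p³ D(u)/u³ - 2p² E(u)/u³ - (p³m₃ + p²m₂)/6` exactly. The binomial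
remainders of `(1 - u)^k` alternate in sign, which yields the bounds for dominated convergence:
`D(u)/u³ → m₃/6` and `E(u)/u³ → m₂/6`. Finally `u → 0` as `p ↓ p_c`, because
`1 - f(1 - u) ≤ m₁u - a_N u²` for some `N ≥ 2` with `a_N > 0` forces `w ≤ (m₁p - 1)/(a_N p²)`.
-/

namespace SpeedExpansion

open Finset

noncomputable def taylorRem (j k : ℕ) (u : ℝ) : ℝ :=
  (-1) ^ j * ((1 - u) ^ k - ∑ i ∈ range j, (k.choose i : ℝ) * (-u) ^ i)

section TaylorRem

variable {u : ℝ}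

lemma taylorRem_zero_left (k : ℕ) (u : ℝ) : taylorRem 0 k u = (1 - u) ^ k := by
  simp [taylorRem]

lemma taylorRem_succ_zero (j : ℕ) (u : ℝ) : taylorRem (j + 1) 0 u = 0 := by
  simp [taylorRem, sum_range_succ', Nat.choose_zero_succ]

lemma taylorRem_succ_left (j k : ℕ) (u : ℝ) :
    taylorRem (j + 1) k u = k.choose j * u ^ j - taylorRem j k u := by
  have hsq : ((-1 : ℝ) ^ j) * (-1) ^ j = 1 := by rw [← mul_pow]; simp
  simp only [taylorRem, sum_range_succ, neg_pow u j, pow_succ]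
  linear_combination (k.choose j * u ^ j) * hsq

lemma taylorRem_succ_succ (j k : ℕ) (u : ℝ) :
    taylorRem (j + 1) (k + 1) u = taylorRem (j + 1) k u + u * taylorRem j k u := by
  induction j with
  | zero =>
    simp only [taylorRem, zero_add, sum_range_one, Nat.choose_zero_right, Nat.cast_one]
    ring
  | succ j ih =>
    have h1 := taylorRem_succ_left (j + 1) (k + 1) u
    have h2 := taylorRem_succ_left (j + 1) k u
    have h3 := taylorRem_succ_left j k u
    rw [Nat.choose_succ_succ', Nat.cast_add] at h1
    linear_combination h1 - ih - h2 - u * h3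

lemma taylorRem_nonneg_and_le (j k : ℕ) (hu0 : 0 ≤ u) (hu1 : u ≤ 1) :
    0 ≤ taylorRem j k u ∧ taylorRem j k u ≤ k.choose j * u ^ j := by
  induction k generalizing j with
  | zero => cases j <;> simp [taylorRem_zero_left, taylorRem_succ_zero, Nat.choose_zero_succ]
  | succ k ih =>
    cases j with
    | zero =>
      rw [taylorRem_zero_left]
      exact ⟨pow_nonneg (by linarith) _, by simpa using pow_le_one₀ (by linarith) (by linarith)⟩
    | succ j =>
      obtain ⟨h0, h1⟩ := ih (j + 1)
      obtain ⟨h0', h1'⟩ := ih j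
      rw [taylorRem_succ_succ, Nat.choose_succ_succ', Nat.cast_add]
      refine ⟨by positivity, ?_⟩
      have h2 := mul_le_mul_of_nonneg_left h1' hu0
      linear_combination h1 + h2

lemma taylorRem_two (k : ℕ) (u : ℝ) : taylorRem 2 k u = (1 - u) ^ k - 1 + k * u := by
  simp only [taylorRem, sum_range_succ, sum_range_zero, Nat.choose_zero_right,
    Nat.choose_one_right, Nat.cast_one]
  ring

lemma taylorRem_three (k : ℕ) (u : ℝ) :
    taylorRem 3 k u = 1 - k * u + k * (k - 1) / 2 * u ^ 2 - (1 - u) ^ k := by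
  simp only [taylorRem, sum_range_succ, sum_range_zero, Nat.choose_zero_right,
    Nat.choose_one_right, Nat.cast_one, Nat.cast_choose_two]
  ring

lemma sq_le_taylorRem_two {k : ℕ} (hk : 2 ≤ k) (hu0 : 0 ≤ u) (hu1 : u ≤ 1) :
    u ^ 2 ≤ taylorRem 2 k u := by
  have hmono : Monotone fun k => taylorRem 2 k u := monotone_nat_of_le_succ fun k => by
    rw [taylorRem_succ_succ]
    nlinarith [(taylorRem_nonneg_and_le 1 k hu0 hu1).1]
  calc u ^ 2 = taylorRem 2 2 u := by rw [taylorRem_two]; push_cast; ring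
    _ ≤ taylorRem 2 k u := hmono hk

lemma tendsto_taylorRem_div_pow (j k : ℕ) :
    Tendsto (fun u => taylorRem j k u / u ^ j) (𝓝[>] 0) (𝓝 (k.choose j)) := by
  have hlower : Tendsto (fun u : ℝ => k.choose j - (k.choose (j + 1) : ℝ) * u) (𝓝[>] 0)
      (𝓝 (k.choose j)) := by
    refine (Continuous.tendsto' ?_ 0 _ (by simp)).mono_left nhdsWithin_le_nhds
    fun_prop
  refine tendsto_of_tendsto_of_tendsto_of_le_of_le' hlower tendsto_const_nhds ?_ ?_ <;>
    filter_upwards [Ioo_mem_nhdsGT (zero_lt_one' ℝ)] with u ⟨hu0, hu1⟩ <;>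
    have hpow : 0 < u ^ j := pow_pos hu0 j
  · have h := (taylorRem_nonneg_and_le (j + 1) k hu0.le hu1.le).2
    rw [taylorRem_succ_left, pow_succ] at h
    rw [le_div_iff₀ hpow]
    nlinarith
  · rw [div_le_iff₀ hpow]
    exact (taylorRem_nonneg_and_le j k hu0.le hu1.le).2

end TaylorRem

section RemainderSeries

variable {j : ℕ} {w : ℕ → ℝ} {g : ℕ → ℕ}

lemma summable_mul_taylorRem (hw : ∀ n, 0 ≤ w n) (hs : Summable fun n => w n * (g n).choose j)
    {u : ℝ} (hu0 : 0 ≤ u) (hu1 : u ≤ 1) : Summable fun n => w n * taylorRem j (g n) u := by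
  refine (hs.mul_right (u ^ j)).of_nonneg_of_le
    (fun n => mul_nonneg (hw n) (taylorRem_nonneg_and_le j (g n) hu0 hu1).1) fun n => ?_
  rw [mul_assoc]
  exact mul_le_mul_of_nonneg_left (taylorRem_nonneg_and_le j (g n) hu0 hu1).2 (hw n)

lemma tendsto_tsum_mul_taylorRem_div_pow (hw : ∀ n, 0 ≤ w n)
    (hs : Summable fun n => w n * (g n).choose j) :
    Tendsto (fun u => (∑' n, w n * taylorRem j (g n) u) / u ^ j) (𝓝[>] 0)
      (𝓝 (∑' n, w n * (g n).choose j)) := by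
  simp_rw [← tsum_div_const, mul_div_assoc]
  refine tendsto_tsum_of_dominated_convergence hs
    (fun n => (tendsto_taylorRem_div_pow j (g n)).const_mul (w n)) ?_
  filter_upwards [Ioo_mem_nhdsGT (zero_lt_one' ℝ)] with u ⟨hu0, hu1⟩ n
  obtain ⟨h0, h1⟩ := taylorRem_nonneg_and_le j (g n) hu0.le hu1.le
  have hpow : 0 < u ^ j := pow_pos hu0 j
  rw [Real.norm_eq_abs, abs_of_nonneg (mul_nonneg (hw n) (div_nonneg h0 hpow.le))]
  exact mul_le_mul_of_nonneg_left ((div_le_iff₀ hpow).2 h1) (hw n)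

end RemainderSeries

lemma cast_choose_three (k : ℕ) : (k.choose 3 : ℝ) = k * (k - 1) * (k - 2) / 6 := by
  rw [Nat.cast_choose_eq_descPochhammer_div]
  simp [descPochhammer_succ_eval, Nat.factorial]

lemma cast_choose_three_succ_div (n : ℕ) : ((n + 1).choose 3 : ℝ) / (n + 1) = n * (n - 1) / 6 := by
  rw [cast_choose_three]
  push_cast
  field_simp
  ring

noncomputable def pgfRem (a : ℕ → ℝ) (u : ℝ) : ℝ := ∑' k, a k * taylorRem 3 k u

/-- `∑ aₙ (1 - (1 - u)^{n+1}) / (n + 1) = ∫_{1-u}^1 f`, so this is `pgfRem` for the coefficients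
`aₙ / (n + 1)` of a primitive of `f`. -/
noncomputable def primRem (a : ℕ → ℝ) (u : ℝ) : ℝ :=
  ∑' n, a n / ((n : ℝ) + 1) * taylorRem 3 (n + 1) u

section Expansions

variable {a : ℕ → ℝ} {m₁ m₂ m₃ u : ℝ}

lemma hasSum_mul_choose_three
    (hm3 : HasSum (fun k : ℕ => (k : ℝ) * ((k : ℝ) - 1) * ((k : ℝ) - 2) * a k) m₃) :
    HasSum (fun k => a k * k.choose 3) (m₃ / 6) :=
  (hm3.div_const 6).congr_fun fun k => by rw [cast_choose_three]; ring

lemma hasSum_div_mul_choose_three_succ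
    (hm2 : HasSum (fun k : ℕ => (k : ℝ) * ((k : ℝ) - 1) * a k) m₂) :
    HasSum (fun n => a n / ((n : ℝ) + 1) * ((n + 1).choose 3 : ℝ)) (m₂ / 6) :=
  (hm2.div_const 6).congr_fun fun n => by
    rw [div_mul_comm, cast_choose_three_succ_div]; ring

lemma hasSum_pgf (ha0 : ∀ k, 0 ≤ a k) (ha : Summable a) {s : ℝ} (hs0 : 0 ≤ s) (hs1 : s ≤ 1) :
    HasSum (fun k => a k * s ^ k) (pgf a s) :=
  (ha.of_nonneg_of_le (fun k => mul_nonneg (ha0 k) (pow_nonneg hs0 k))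
    fun k => mul_le_of_le_one_right (ha0 k) (pow_le_one₀ hs0 hs1)).hasSum

lemma exists_two_le_pos_of_one_lt (ha0 : ∀ k, 0 ≤ a k) (ha1 : HasSum a 1)
    (hm1 : HasSum (fun k : ℕ => (k : ℝ) * a k) m₁) (h1m : 1 < m₁) : ∃ N, 2 ≤ N ∧ 0 < a N := by
  by_contra! h
  have hle : ∀ k : ℕ, (k : ℝ) * a k ≤ a k := fun k => by
    rcases lt_or_ge k 2 with hk | hk
    · interval_cases k <;> simp [ha0 0]
    · simp [le_antisymm (h k hk) (ha0 k)]
  linarith [hasSum_le hle hm1 ha1]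

lemma one_sub_pgf_one_sub_le (ha0 : ∀ k, 0 ≤ a k) (ha1 : HasSum a 1)
    (hm1 : HasSum (fun k : ℕ => (k : ℝ) * a k) m₁) {N : ℕ} (hN : 2 ≤ N)
    (hu0 : 0 ≤ u) (hu1 : u ≤ 1) : 1 - pgf a (1 - u) ≤ m₁ * u - a N * u ^ 2 := by
  have hrem : HasSum (fun k => a k * taylorRem 2 k u) (pgf a (1 - u) - 1 + m₁ * u) := by
    refine (((hasSum_pgf ha0 ha1.summable (by linarith) (by linarith)).sub ha1).add
      (hm1.mul_right u)).congr_fun fun k => ?_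
    rw [taylorRem_two]
    ring
  have hN_le : a N * taylorRem 2 N u ≤ pgf a (1 - u) - 1 + m₁ * u :=
    le_hasSum hrem N fun k _ => mul_nonneg (ha0 k) (taylorRem_nonneg_and_le 2 k hu0 hu1).1
  nlinarith [mul_le_mul_of_nonneg_left (sq_le_taylorRem_two hN hu0 hu1) (ha0 N)]

lemma hasSum_pgf_one_sub (ha0 : ∀ k, 0 ≤ a k) (ha1 : HasSum a 1)
    (hm1 : HasSum (fun k : ℕ => (k : ℝ) * a k) m₁)
    (hm2 : HasSum (fun k : ℕ => (k : ℝ) * ((k : ℝ) - 1) * a k) m₂)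
    (hm3 : HasSum (fun k : ℕ => (k : ℝ) * ((k : ℝ) - 1) * ((k : ℝ) - 2) * a k) m₃)
    (hu0 : 0 ≤ u) (hu1 : u ≤ 1) :
    HasSum (fun k => a k * (1 - u) ^ k) (1 - m₁ * u + m₂ / 2 * u ^ 2 - pgfRem a u) := by
  have hrem := (summable_mul_taylorRem (g := fun k => k) ha0 (hasSum_mul_choose_three hm3).summable
    hu0 hu1).hasSum
  exact (((ha1.sub (hm1.mul_right u)).add ((hm2.div_const 2).mul_right (u ^ 2))).sub
    hrem).congr_fun fun k => by rw [taylorRem_three]; ring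

lemma hasSum_primitive (ha0 : ∀ k, 0 ≤ a k) (ha1 : HasSum a 1)
    (hm1 : HasSum (fun k : ℕ => (k : ℝ) * a k) m₁)
    (hm2 : HasSum (fun k : ℕ => (k : ℝ) * ((k : ℝ) - 1) * a k) m₂)
    (hu0 : 0 ≤ u) (hu1 : u ≤ 1) :
    HasSum (fun n => a n * ((1 - (1 - u) ^ (n + 1)) / (n + 1)))
      (u - m₁ / 2 * u ^ 2 + primRem a u) := by
  have hrem := (summable_mul_taylorRem (g := (· + 1))
    (fun n => div_nonneg (ha0 n) (by positivity)) (hasSum_div_mul_choose_three_succ hm2).summable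
    hu0 hu1).hasSum
  have h := ((ha1.mul_right u).sub ((hm1.div_const 2).mul_right (u ^ 2))).add hrem
  rw [one_mul] at h
  refine h.congr_fun fun n => ?_
  rw [taylorRem_three]
  push_cast
  field_simp
  ring

lemma tendsto_pgfRem_div_cube (ha0 : ∀ k, 0 ≤ a k)
    (hm3 : HasSum (fun k : ℕ => (k : ℝ) * ((k : ℝ) - 1) * ((k : ℝ) - 2) * a k) m₃) :
    Tendsto (fun u => pgfRem a u / u ^ 3) (𝓝[>] 0) (𝓝 (m₃ / 6)) := by
  have h := tendsto_tsum_mul_taylorRem_div_pow (g := fun k => k) ha0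
    (hasSum_mul_choose_three hm3).summable
  rwa [(hasSum_mul_choose_three hm3).tsum_eq] at h

lemma tendsto_primRem_div_cube (ha0 : ∀ k, 0 ≤ a k)
    (hm2 : HasSum (fun k : ℕ => (k : ℝ) * ((k : ℝ) - 1) * a k) m₂) :
    Tendsto (fun u => primRem a u / u ^ 3) (𝓝[>] 0) (𝓝 (m₂ / 6)) := by
  have h := tendsto_tsum_mul_taylorRem_div_pow (g := (· + 1))
    (fun n => div_nonneg (ha0 n) (by positivity)) (hasSum_div_mul_choose_three_succ hm2).summable
  rwa [(hasSum_div_mul_choose_three_succ hm2).tsum_eq] at h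

end Expansions

lemma hasSum_tsum_swap_of_nonneg {f : ℕ → ℕ → ℝ} (hf : ∀ n k, 0 ≤ f n k) {r : ℕ → ℝ}
    (hr : ∀ n, HasSum (f n) (r n)) {S : ℝ} (hS : HasSum r S) :
    HasSum (fun k => ∑' n, f n k) S := by
  have hF : Summable (Function.uncurry f) :=
    (summable_prod_of_nonneg fun x => hf x.1 x.2).2
      ⟨fun n => (hr n).summable, by simpa only [(hr _).tsum_eq] using hS.summable⟩
  have htot : HasSum (Function.uncurry f) S :=
    hS.unique (hF.hasSum.prod_fiberwise hr) ▸ hF.hasSum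
  have hswap : HasSum (fun x : ℕ × ℕ => f x.2 x.1) S :=
    (Equiv.prodComm ℕ ℕ).hasSum_iff.2 htot
  exact hswap.prod_fiberwise fun k => (hswap.summable.prod_factor k).hasSum

section Thinning

variable {a : ℕ → ℝ} {p : ℝ}

lemma hasSum_thinned_mul (ha0 : ∀ k, 0 ≤ a k) (ha : Summable a) (hp0 : 0 ≤ p) (hp1 : p ≤ 1)
    {c : ℕ → ℝ} (hc0 : ∀ k, 0 ≤ c k) (hc1 : ∀ k, c k ≤ 1) :
    HasSum (fun k => thinned a p k * c k)
      (∑' n, a n * ∑ k ∈ range (n + 1), p ^ k * (1 - p) ^ (n - k) * n.choose k * c k) := by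
  set f : ℕ → ℕ → ℝ := fun n k =>
    (if k ≤ n then (n.choose k : ℝ) * p ^ k * (1 - p) ^ (n - k) * a n else 0) * c k
  have hf : ∀ n k, 0 ≤ f n k := fun n k => by
    have := ha0 n
    have : 0 ≤ 1 - p := by linarith
    exact mul_nonneg (by split_ifs <;> positivity) (hc0 k)
  have hrow : ∀ n, HasSum (f n)
      (a n * ∑ k ∈ range (n + 1), p ^ k * (1 - p) ^ (n - k) * n.choose k * c k) := fun n => by
    have h : HasSum (f n) (∑ k ∈ range (n + 1), f n k) :=
      hasSum_sum_of_ne_finset_zero fun k hk => by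
        simp only [f, if_neg (by simpa [Nat.lt_succ_iff] using hk : ¬k ≤ n), zero_mul]
    convert h using 1
    rw [mul_sum]
    refine sum_congr rfl fun k hk => ?_
    simp only [f, if_pos (Nat.lt_succ_iff.1 (mem_range.1 hk))]
    ring
  have hrow_le : ∀ n, a n * ∑ k ∈ range (n + 1), p ^ k * (1 - p) ^ (n - k) * n.choose k * c k
      ≤ a n := fun n => by
    refine mul_le_of_le_one_right (ha0 n) ?_
    have : 0 ≤ 1 - p := by linarith
    calc ∑ k ∈ range (n + 1), p ^ k * (1 - p) ^ (n - k) * n.choose k * c k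
        ≤ ∑ k ∈ range (n + 1), p ^ k * (1 - p) ^ (n - k) * n.choose k :=
          sum_le_sum fun k _ => mul_le_of_le_one_right (by positivity) (hc1 k)
      _ = 1 := by rw [← add_pow]; simp
  have hS : Summable fun n =>
      a n * ∑ k ∈ range (n + 1), p ^ k * (1 - p) ^ (n - k) * n.choose k * c k :=
    ha.of_nonneg_of_le (fun n => (hrow n).nonneg (hf n)) hrow_le
  refine (hasSum_tsum_swap_of_nonneg hf hrow hS.hasSum).congr_fun fun k => ?_
  simp only [f, thinned, tsum_mul_right]

lemma hasSum_thinned_mul_pow (ha0 : ∀ k, 0 ≤ a k) (ha : Summable a) (hp0 : 0 ≤ p) (hp1 : p ≤ 1)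
    {s : ℝ} (hs0 : 0 ≤ s) (hs1 : s ≤ 1) :
    HasSum (fun k => thinned a p k * s ^ k) (pgfp a p s) := by
  convert hasSum_thinned_mul ha0 ha hp0 hp1 (pow_nonneg hs0) fun k => pow_le_one₀ hs0 hs1
    using 1
  refine tsum_congr fun n => ?_
  rw [add_sub_assoc, add_pow]
  exact congrArg _ (sum_congr rfl fun k _ => by ring)

lemma sum_range_choose_mul_one_sub_pow_succ_div (n : ℕ) (hp : p ≠ 0) (s : ℝ) :
    ∑ k ∈ range (n + 1), p ^ k * (1 - p) ^ (n - k) * n.choose k * ((1 - s ^ (k + 1)) / (k + 1))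
      = (1 - (p * s + 1 - p) ^ (n + 1)) / ((n + 1) * p) := by
  have hbinom : ∑ j ∈ range (n + 2), p ^ j * (1 - p) ^ (n + 1 - j) * (n + 1).choose j * (1 - s ^ j)
      = (p + (1 - p)) ^ (n + 1) - (p * s + (1 - p)) ^ (n + 1) := by
    rw [add_pow, add_pow, ← sum_sub_distrib]
    exact sum_congr rfl fun j _ => by ring
  rw [add_sub_cancel, one_pow, ← add_sub_assoc, sum_range_succ'] at hbinom
  simp only [pow_zero, sub_self, mul_zero, add_zero] at hbinom
  rw [eq_div_iff (by positivity), sum_mul, ← hbinom]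
  refine sum_congr rfl fun k hk => ?_
  have hchoose : ((n + 1 : ℕ) : ℝ) * n.choose k = (n + 1).choose (k + 1) * (k + 1 : ℕ) := by
    exact_mod_cast Nat.add_one_mul_choose_eq n k
  rw [Nat.add_sub_add_right]
  push_cast at hchoose
  field_simp
  linear_combination (p ^ (k + 1) * (1 - p) ^ (n - k) * (1 - s ^ (k + 1))) * hchoose

lemma hasSum_thinned_mul_one_sub_pow_succ_div (ha0 : ∀ k, 0 ≤ a k) (ha : Summable a)
    (hp0 : 0 < p) (hp1 : p ≤ 1) {s : ℝ} (hs0 : 0 ≤ s) (hs1 : s ≤ 1) :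
    HasSum (fun k => thinned a p k * ((1 - s ^ (k + 1)) / (k + 1)))
      ((∑' n, a n * ((1 - (p * s + 1 - p) ^ (n + 1)) / (n + 1))) / p) := by
  have hc0 (k : ℕ) : 0 ≤ 1 - s ^ (k + 1) := sub_nonneg.2 (pow_le_one₀ hs0 hs1)
  have hc1 (k : ℕ) : (1 - s ^ (k + 1)) / (k + 1) ≤ 1 := by
    rw [div_le_one (by positivity)]
    linarith [pow_nonneg hs0 (k + 1), (Nat.cast_nonneg k : (0 : ℝ) ≤ k)]
  convert hasSum_thinned_mul ha0 ha hp0.le hp1 (fun k => div_nonneg (hc0 k) (by positivity)) hc1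
    using 1
  rw [← tsum_div_const]
  refine tsum_congr fun n => ?_
  rw [sum_range_choose_mul_one_sub_pow_succ_div n hp0.ne']
  field_simp

end Thinning

section Speed

variable {a : ℕ → ℝ} {q : ℝ → ℝ} {p : ℝ}

lemma one_add_mul_speedLPP (ha0 : ∀ k, 0 ≤ a k) (ha1 : HasSum a 1) (hp0 : 0 < p) (hp1 : p ≤ 1)
    (hq0 : 0 ≤ q p) (hq1 : q p < 1) (hfix : pgfp a p (q p) = q p) :
    (1 + q p) * speedLPP a q p
      = (1 - q p ^ 2 - 2 * ((∑' n, a n * ((1 - (p * q p + 1 - p) ^ (n + 1)) / (n + 1))) / p))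
        / (1 - q p) := by
  have hmass := hasSum_thinned_mul_pow ha0 ha1.summable hp0.le hp1 zero_le_one le_rfl
  have hpow := hasSum_thinned_mul_pow ha0 ha1.summable hp0.le hp1 hq0 hq1.le
  have hint := hasSum_thinned_mul_one_sub_pow_succ_div ha0 ha1.summable hp0 hp1 hq0 hq1.le
  have hq2 : 1 - q p ^ 2 ≠ 0 := by nlinarith
  have hspeed := (((hmass.sub (hpow.mul_left (q p))).sub (hint.mul_left 2)).div_const
    (1 - q p ^ 2)).congr_fun (g := fun k : ℕ => ((k : ℝ) - 1) / ((k : ℝ) + 1) * thinned a p k *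
      ((1 - q p ^ (k + 1)) / (1 - q p ^ 2))) fun k => by
    field_simp
    ring
  have hone : pgfp a p 1 = 1 := by simp [pgfp, pgf, ha1.tsum_eq]
  rw [speedLPP, hspeed.tsum_eq, hfix, hone]
  have : 1 - q p ≠ 0 := by linarith
  field_simp
  ring

lemma speed_error_div_sq_eq (ha0 : ∀ k, 0 ≤ a k) (ha1 : HasSum a 1)
    {m₁ m₂ m₃ pc : ℝ} (hm1 : HasSum (fun k : ℕ => (k : ℝ) * a k) m₁)
    (hm2 : HasSum (fun k : ℕ => (k : ℝ) * ((k : ℝ) - 1) * a k) m₂)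
    (hm3 : HasSum (fun k : ℕ => (k : ℝ) * ((k : ℝ) - 1) * ((k : ℝ) - 2) * a k) m₃)
    (hm₁ : m₁ ≠ 0) (hpc : pc = 1 / m₁) (hp0 : 0 < p) (hp1 : p ≤ 1)
    (hq0 : 0 ≤ q p) (hq1 : q p < 1) (hfix : pgfp a p (q p) = q p) :
    ((1 + q p) * speedLPP a q p - m₁ * (p - pc)
        + (1 / 2) * (1 - q p) * p ^ 2 * m₂
        - (1 / 6) * (1 - q p) ^ 2 * (p ^ 3 * m₃ + p ^ 2 * m₂)) / (1 - q p) ^ 2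
      = 1 / 2 * p ^ 2 * m₂ + pgfRem a (p * (1 - q p)) / (p * (1 - q p)) ^ 3 * p ^ 3 * q p
        - 2 * (primRem a (p * (1 - q p)) / (p * (1 - q p)) ^ 3) * p ^ 2
        - 1 / 6 * (p ^ 3 * m₃ + p ^ 2 * m₂) := by
  have hw : 0 < 1 - q p := by linarith
  have hu0 : 0 ≤ p * (1 - q p) := by positivity
  have hu1 : p * (1 - q p) ≤ 1 := by nlinarith
  have harg : p * q p + 1 - p = 1 - p * (1 - q p) := by ring
  have hD : pgfRem a (p * (1 - q p))
      = 1 - m₁ * (p * (1 - q p)) + m₂ / 2 * (p * (1 - q p)) ^ 2 - q p := by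
    have h := (hasSum_pgf_one_sub ha0 ha1 hm1 hm2 hm3 hu0 hu1).tsum_eq
    rw [pgfp, harg, pgf] at hfix
    linarith
  rw [one_add_mul_speedLPP ha0 ha1 hp0 hp1 hq0 hq1 hfix, harg,
    (hasSum_primitive ha0 ha1 hm1 hm2 hu0 hu1).tsum_eq, hD, hpc]
  field_simp
  ring

end Speed

lemma tendsto_one_sub_fixedPoint {a : ℕ → ℝ} {m₁ pc : ℝ} {q : ℝ → ℝ}
    (ha0 : ∀ k, 0 ≤ a k) (ha1 : HasSum a 1)
    (hm1 : HasSum (fun k : ℕ => (k : ℝ) * a k) m₁) (h1m : 1 < m₁) (hpc : pc = 1 / m₁)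
    (hq : ∀ p ∈ Set.Ioc pc 1, q p ∈ Set.Ico (0 : ℝ) 1 ∧ pgfp a p (q p) = q p) :
    Tendsto (fun p => 1 - q p) (𝓝[>] pc) (𝓝 0) := by
  obtain ⟨N, hN, haN⟩ := exists_two_le_pos_of_one_lt ha0 ha1 hm1 h1m
  have hpc0 : 0 < pc := by rw [hpc]; positivity
  have hpc1 : pc < 1 := by rw [hpc, div_lt_one (by linarith)]; exact h1m
  have hbound : Tendsto (fun p => (m₁ * p - 1) / (a N * p ^ 2)) (𝓝[>] pc) (𝓝 0) := by
    have h : Tendsto (fun p => (m₁ * p - 1) / (a N * p ^ 2)) (𝓝 pc)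
        (𝓝 ((m₁ * pc - 1) / (a N * pc ^ 2))) :=
      ((tendsto_id.const_mul m₁).sub_const 1).div ((tendsto_id.pow 2).const_mul (a N))
        (by positivity)
    rw [hpc, mul_one_div_cancel (by linarith), sub_self, zero_div, ← hpc] at h
    exact h.mono_left nhdsWithin_le_nhds
  refine tendsto_of_tendsto_of_tendsto_of_le_of_le' tendsto_const_nhds hbound ?_ ?_ <;>
    filter_upwards [Ioc_mem_nhdsGT hpc1] with p hp <;>
    obtain ⟨⟨hq0, hq1⟩, hfix⟩ := hq p hp
  · linarith
  -- the fixed point gives `w ≤ m₁ p w - a_N p² w²` for `w = 1 - q p`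
  have hp0 : 0 < p := hpc0.trans hp.1
  have hle := one_sub_pgf_one_sub_le ha0 ha1 hm1 hN (u := p * (1 - q p))
    (by nlinarith) (by nlinarith [hp.2])
  rw [← show p * q p + 1 - p = 1 - p * (1 - q p) by ring, ← pgfp, hfix] at hle
  rw [le_div_iff₀ (by positivity)]
  nlinarith

end SpeedExpansion

open SpeedExpansion in
/-- As `p ↓ p_c`, the expansion
`(1 + q_p)v(p) = m₁(p - p_c) - (1/2)(1 - q_p)p²m₂ + (1/6)(1 - q_p)²(p³m₃ + p²m₂) + o((1 - q_p)²)`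
holds. -/
theorem speed_expansion
    (a : ℕ → ℝ) (m₁ m₂ m₃ pc : ℝ) (q : ℝ → ℝ)
    (ha0 : ∀ k, 0 ≤ a k) (ha1 : HasSum a 1)
    (hm1 : HasSum (fun k : ℕ => (k : ℝ) * a k) m₁) (h1m : 1 < m₁)
    (hm2 : HasSum (fun k : ℕ => (k : ℝ) * ((k : ℝ) - 1) * a k) m₂)
    (hm3 : HasSum (fun k : ℕ => (k : ℝ) * ((k : ℝ) - 1) * ((k : ℝ) - 2) * a k) m₃)
    (hpc : pc = 1 / m₁)
    (hq : ∀ p ∈ Set.Ioc pc 1, q p ∈ Set.Ico (0 : ℝ) 1 ∧ pgfp a p (q p) = q p) :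
    Tendsto
      (fun p =>
        ((1 + q p) * speedLPP a q p - m₁ * (p - pc)
            + (1 / 2) * (1 - q p) * p ^ 2 * m₂
            - (1 / 6) * (1 - q p) ^ 2 * (p ^ 3 * m₃ + p ^ 2 * m₂)) / (1 - q p) ^ 2)
      (𝓝[>] pc) (𝓝 0) := by
  have hpc0 : 0 < pc := by rw [hpc]; positivity
  have hpc1 : pc < 1 := by rw [hpc, div_lt_one (by linarith)]; exact h1m
  have hw := tendsto_one_sub_fixedPoint ha0 ha1 hm1 h1m hpc hq
  have hq1 : Tendsto q (𝓝[>] pc) (𝓝 1) := by simpa using (tendsto_const_nhds (x := 1)).sub hw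
  have hp : Tendsto (fun p : ℝ => p) (𝓝[>] pc) (𝓝 pc) := nhdsWithin_le_nhds
  have hIoc : ∀ᶠ p in 𝓝[>] pc, p ∈ Set.Ioc pc 1 := Ioc_mem_nhdsGT hpc1
  have hu : Tendsto (fun p => p * (1 - q p)) (𝓝[>] pc) (𝓝[>] 0) :=
    tendsto_nhdsWithin_iff.2 ⟨by simpa using hp.mul hw, by
      filter_upwards [hIoc] with p hp
      exact mul_pos (hpc0.trans hp.1) (sub_pos.2 (hq p hp).1.2)⟩
  have hD := (tendsto_pgfRem_div_cube ha0 hm3).comp hu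
  have hE := (tendsto_primRem_div_cube ha0 hm2).comp hu
  rw [show (0 : ℝ) = 1 / 2 * pc ^ 2 * m₂ + m₃ / 6 * pc ^ 3 * 1 - 2 * (m₂ / 6) * pc ^ 2
    - 1 / 6 * (pc ^ 3 * m₃ + pc ^ 2 * m₂) by ring]
  refine Tendsto.congr' ?_ (((((tendsto_const_nhds.mul (hp.pow 2)).mul tendsto_const_nhds).add
    ((hD.mul (hp.pow 3)).mul hq1)).sub ((tendsto_const_nhds.mul hE).mul (hp.pow 2))).sub
    (tendsto_const_nhds.mul (((hp.pow 3).mul tendsto_const_nhds).add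
      ((hp.pow 2).mul tendsto_const_nhds))))
  filter_upwards [hIoc] with p hp
  obtain ⟨⟨hq0, hq1⟩, hfix⟩ := hq p hp
  exact (speed_error_div_sq_eq ha0 ha1 hm1 hm2 hm3 (by linarith) hpc (hpc0.trans hp.1) hp.2
    hq0 hq1 hfix).symm
end
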